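/- Let T be a standard Young tableau of skew shape λ/μ with n cells and let R = Rot_SE(T). Then Rc_SE(T) = {n,…,n−k+1}, where k is maximal such that S = {n−1,…,n−k+1} satisfies the following two properties: (i) S is southeast min-unimodal in R and pos_R(S) is contained in the same connected component of λ/μ as pos_R(n); (ii) pos_R(S) does not contain both the northern neighbor and the western neighbor of pos_R(n), and moreover: if pos_R(S) contains the northern (resp. western) neighbor of pos_R(n), then S is balanced in R with respect to the northern (resp. western) balance point of pos_R(n), while if pos_R(S) contains neither neighbor of pos_R(n), then S is balanced in R with respect to both the northern and western balance points of pos_R(n). (Here pos_R(n) is a southeast exterior corner of λ/μ, so its balance points are defined; for k = 1 the set S is empty and the conditions hold vacuously.) -/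

import Mathlib

/-!
Common definitions for skew shapes, standard Young tableaux, the southeast
boundary, southeast min-unimodal sets, the southeast rotation `Rot_SE`,
balance, balance points, and the map `Θ`, following the paper.

Cells are pairs `(i, j) : ℕ × ℕ` (row `i` counted from the top, column `j`
counted from the left).  South means larger row index, east means larger
column index.
-/

open scoped Classical

namespace SkewSE

abbrev Cell : Type := ℕ × ℕ

/-- `a` is weakly southwest of `b`: weakly south (row ≥) and weakly west (col ≤). -/
def weakSW (a b : Cell) : Prop := b.1 ≤ a.1 ∧ a.2 ≤ b.2

/-- `a` is strictly southwest of `b`: strictly south and strictly west. -/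
def strictSW (a b : Cell) : Prop := b.1 < a.1 ∧ a.2 < b.2

/-- The (strict) southwest-to-northeast order on cells:
`a` comes before `b` if `a` is weakly southwest of `b` and `a ≠ b`. -/
def swLT (a b : Cell) : Prop := weakSW a b ∧ a ≠ b

/-- Two cells are adjacent if they share an edge. -/
def adjacent (a b : Cell) : Prop :=
  (a.1 = b.1 ∧ (a.2 = b.2 + 1 ∨ b.2 = a.2 + 1)) ∨
  (a.2 = b.2 ∧ (a.1 = b.1 + 1 ∨ b.1 = a.1 + 1))

/-- `a` and `b` lie in the same connected component of the set of cells `P`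
(with respect to edge-adjacency). -/
def sameComp (P : Finset Cell) (a b : Cell) : Prop :=
  a ∈ P ∧ b ∈ P ∧ Relation.ReflTransGen (fun x y => x ∈ P ∧ y ∈ P ∧ adjacent x y) a b

/-- The cells of the skew shape `λ/μ`. -/
def skewCells (lam mu : YoungDiagram) : Finset Cell := lam.cells \ mu.cells

/-- `n = |λ/μ|`, the number of cells. -/
def numCells (lam mu : YoungDiagram) : ℕ := (skewCells lam mu).card

/-- A set of cells is a skew shape if it is the difference of two Young diagrams. -/
def IsSkewShape (P : Finset Cell) : Prop :=
  ∃ lam' mu' : YoungDiagram, mu' ≤ lam' ∧ P = lam'.cells \ mu'.cells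

/-- A standard Young tableau of skew shape `λ/μ`: a bijective filling of the
cells by `{1,…,n}`, strictly increasing west-to-east along rows and
north-to-south down columns.  (Entries are `0` off the shape.) -/
structure SYT (lam mu : YoungDiagram) where
  entry : Cell → ℕ
  bijOn : Set.BijOn entry (skewCells lam mu : Set Cell)
    ((Finset.Icc 1 (numCells lam mu) : Finset ℕ) : Set ℕ)
  row_lt : ∀ i j : ℕ, (i, j) ∈ skewCells lam mu → (i, j + 1) ∈ skewCells lam mu →
    entry (i, j) < entry (i, j + 1)
  col_lt : ∀ i j : ℕ, (i, j) ∈ skewCells lam mu → (i + 1, j) ∈ skewCells lam mu →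
    entry (i, j) < entry (i + 1, j)
  zero_outside : ∀ c : Cell, c ∉ skewCells lam mu → entry c = 0

variable {lam mu : YoungDiagram}

/-- `pos T x` is the cell of `T` containing the entry `x`. -/
noncomputable def pos (T : SYT lam mu) (x : ℕ) : Cell :=
  if h : ∃ c ∈ skewCells lam mu, T.entry c = x then h.choose else (0, 0)

/-- The southeast boundary of `λ/μ`: cells `(i,j)` with `(i+1, j+1) ∉ λ/μ`. -/
def SEboundary (lam mu : YoungDiagram) : Finset Cell :=
  (skewCells lam mu).filter (fun c => (c.1 + 1, c.2 + 1) ∉ skewCells lam mu)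

/-- `S` is southeast min-unimodal in `T`: the cells `pos_T(S)` lie on the
southeast boundary, in a single connected component of `λ/μ`, are totally
ordered southwest-to-northeast, and the entries, read in the
southwest-to-northeast order of their cells, strictly decrease until
reaching `min S` and then strictly increase. -/
def MinUnimodalSE (T : SYT lam mu) (S : Finset ℕ) : Prop :=
  ∃ hne : S.Nonempty,
    S ⊆ Finset.Icc 1 (numCells lam mu) ∧
    (∀ x ∈ S, pos T x ∈ SEboundary lam mu) ∧
    (∀ x ∈ S, ∀ y ∈ S, sameComp (skewCells lam mu) (pos T x) (pos T y)) ∧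
    (∀ x ∈ S, ∀ y ∈ S, weakSW (pos T x) (pos T y) ∨ weakSW (pos T y) (pos T x)) ∧
    (∀ x ∈ S, ∀ y ∈ S, swLT (pos T x) (pos T y) →
      (weakSW (pos T y) (pos T (S.min' hne)) → y < x) ∧
      (weakSW (pos T (S.min' hne)) (pos T x) → x < y))

/-- `k` such that `Rc_SE(T) = {n-k+1, …, n}`: the maximal `k ≥ 1` for which
this set is southeast min-unimodal in `T`. -/
noncomputable def kSE (T : SYT lam mu) : ℕ :=
  sSup {k : ℕ | 1 ≤ k ∧ k ≤ numCells lam mu ∧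
    MinUnimodalSE T (Finset.Icc (numCells lam mu - k + 1) (numCells lam mu))}

/-- `Rc_SE(T) = {n-k+1, …, n}` with `k` maximal as above. -/
noncomputable def RcSE (T : SYT lam mu) : Finset ℕ :=
  Finset.Icc (numCells lam mu - kSE T + 1) (numCells lam mu)

/-- `Rp_SE(T) = pos_T(Rc_SE(T))`. -/
noncomputable def RpSE (T : SYT lam mu) : Finset Cell := (RcSE T).image (pos T)

/-- `Y = pos_T(min Rc_SE(T))`. -/
noncomputable def Ycell (T : SYT lam mu) : Cell :=
  pos T (numCells lam mu - kSE T + 1)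

/-- The position of the largest entry `n`. -/
noncomputable def posN (T : SYT lam mu) : Cell := pos T (numCells lam mu)

/-- `pos_T(n)` is the southwesternmost cell of `Rp_SE(T)`. -/
def SWmostAtN (T : SYT lam mu) : Prop := ∀ c ∈ RpSE T, weakSW (posN T) c

/-- `pos_T(n)` is the northeasternmost cell of `Rp_SE(T)`. -/
def NEmostAtN (T : SYT lam mu) : Prop := ∀ c ∈ RpSE T, weakSW c (posN T)

/-- The southernmost cell of `P` in the column of `Y`. -/
noncomputable def southEnd (P : Finset Cell) (Y : Cell) : Cell :=
  if h : ∃ c ∈ P, c.2 = Y.2 ∧ ∀ d ∈ P, d.2 = Y.2 → d.1 ≤ c.1 then h.choose else Y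

/-- The easternmost cell of `P` in the row of `Y`. -/
noncomputable def eastEnd (P : Finset Cell) (Y : Cell) : Cell :=
  if h : ∃ c ∈ P, c.1 = Y.1 ∧ ∀ d ∈ P, d.1 = Y.1 → d.2 ≤ c.2 then h.choose else Y

/-- The southeast rotation endpoint `X` of `T`. -/
noncomputable def Xend (T : SYT lam mu) : Cell :=
  if SWmostAtN T then
    if ∃ c ∈ RpSE T, c.2 = (Ycell T).2 ∧ (Ycell T).1 < c.1 then
      southEnd (RpSE T) (Ycell T)
    else eastEnd (RpSE T) (Ycell T)
  else
    if ∃ c ∈ RpSE T, c.1 = (Ycell T).1 ∧ (Ycell T).2 < c.2 then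
      eastEnd (RpSE T) (Ycell T)
    else southEnd (RpSE T) (Ycell T)

/-- The cells `Z_1, …, Z_j` of `Rp_SE(T)` lying weakly between `pos_T(n)`
and `X` in the southwest-to-northeast order. -/
noncomputable def chainSE (T : SYT lam mu) : Finset Cell :=
  (RpSE T).filter (fun c =>
    (weakSW (posN T) c ∧ weakSW c (Xend T)) ∨ (weakSW (Xend T) c ∧ weakSW c (posN T)))

/-- The next cell of `P` after `c` in southwest-to-northeast order. -/
noncomputable def nextNE (P : Finset Cell) (c : Cell) : Cell :=
  if h : ∃ d ∈ P, swLT c d ∧ ∀ e ∈ P, swLT c e → weakSW d e then h.choose else c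

/-- The next cell of `P` before `c` in southwest-to-northeast order. -/
noncomputable def nextSW (P : Finset Cell) (c : Cell) : Cell :=
  if h : ∃ d ∈ P, swLT d c ∧ ∀ e ∈ P, swLT e c → weakSW e d then h.choose else c

/-- The filling `Rot_SE(T)` produced by the southeast rotation:
`n` moves to `X`, and the entries of the cells of `Rp_SE(T)` weakly between
`pos_T(n)` and `X` are each shifted one position towards `pos_T(n)`;
all other entries are unchanged. -/
noncomputable def rotEntry (T : SYT lam mu) (c : Cell) : ℕ :=
  if c ∈ chainSE T then
    if c = Xend T then numCells lam mu
    else if SWmostAtN T then T.entry (nextNE (chainSE T) c)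
    else T.entry (nextSW (chainSE T) c)
  else T.entry c

/-- The southeast rotation as a map `SYT(λ/μ) → SYT(λ/μ)`
(well-defined since the rotated filling is again standard). -/
noncomputable def RotSE (T : SYT lam mu) : SYT lam mu :=
  if h : ∃ R : SYT lam mu, R.entry = rotEntry T then h.choose else T

/-- The descent set `Des(T) = {i : pos_T(i+1) is strictly south of pos_T(i)}`. -/
noncomputable def Des (T : SYT lam mu) : Finset ℕ :=
  (Finset.Icc 1 (numCells lam mu - 1)).filter
    (fun i => (pos T i).1 < (pos T (i + 1)).1)

/-- `S` is balanced with respect to `W` in `U`: the entries in the cells of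
`pos_U(S)` weakly northeast of `W` increase from southwest to northeast, and
the entries in the cells of `pos_U(S)` weakly southwest of `W` increase from
northeast to southwest. -/
def Balanced (U : SYT lam mu) (S : Finset ℕ) (W : Cell) : Prop :=
  (∀ x ∈ S, ∀ y ∈ S, weakSW W (pos U x) → weakSW W (pos U y) →
    swLT (pos U x) (pos U y) → x < y) ∧
  (∀ x ∈ S, ∀ y ∈ S, weakSW (pos U x) W → weakSW (pos U y) W →
    swLT (pos U y) (pos U x) → x < y)

/-- `a` and `b` are distinct and consecutive in the southwest-to-northeast
order on the set of cells `Q`. -/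
def consecutiveIn (Q : Finset Cell) (a b : Cell) : Prop :=
  a ∈ Q ∧ b ∈ Q ∧ (swLT a b ∨ swLT b a) ∧
  ∀ c ∈ Q, ¬ (swLT a c ∧ swLT c b) ∧ ¬ (swLT b c ∧ swLT c a)

/-- The northern balance point of a southeast exterior corner `Z`: the cell
of the southeast boundary weakly due north of `Z` farthest from `Z`. -/
noncomputable def northBP (lam mu : YoungDiagram) (Z : Cell) : Cell :=
  if h : ∃ c ∈ SEboundary lam mu, c.2 = Z.2 ∧ c.1 ≤ Z.1 ∧
      ∀ d ∈ SEboundary lam mu, d.2 = Z.2 → d.1 ≤ Z.1 → c.1 ≤ d.1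
  then h.choose else Z

/-- The western balance point of a southeast exterior corner `Z`: the cell
of the southeast boundary weakly due west of `Z` farthest from `Z`. -/
noncomputable def westBP (lam mu : YoungDiagram) (Z : Cell) : Cell :=
  if h : ∃ c ∈ SEboundary lam mu, c.1 = Z.1 ∧ c.2 ≤ Z.2 ∧
      ∀ d ∈ SEboundary lam mu, d.1 = Z.1 → d.2 ≤ Z.2 → c.2 ≤ d.2
  then h.choose else Z

/-- Property (i) for `S = {n-1, …, n-k+1}` in `R`:
`S` is southeast min-unimodal in `R` and lies in the same connected
component of `λ/μ` as `pos_R(n)` (vacuous when `S` is empty, i.e. `k = 1`). -/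
def PropI (R : SYT lam mu) (k : ℕ) : Prop :=
  (Finset.Icc (numCells lam mu - k + 1) (numCells lam mu - 1)).Nonempty →
    MinUnimodalSE R (Finset.Icc (numCells lam mu - k + 1) (numCells lam mu - 1)) ∧
    ∀ x ∈ Finset.Icc (numCells lam mu - k + 1) (numCells lam mu - 1),
      sameComp (skewCells lam mu) (pos R x) (pos R (numCells lam mu))

/-- `pos_R(S)` contains the northern neighbor of `pos_R(n)`,
for `S = {n-1, …, n-k+1}`. -/
def hasNorthNbr (R : SYT lam mu) (k : ℕ) : Prop :=
  ∃ x ∈ Finset.Icc (numCells lam mu - k + 1) (numCells lam mu - 1),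
    (pos R x).2 = (pos R (numCells lam mu)).2 ∧
    (pos R x).1 + 1 = (pos R (numCells lam mu)).1

/-- `pos_R(S)` contains the western neighbor of `pos_R(n)`,
for `S = {n-1, …, n-k+1}`. -/
def hasWestNbr (R : SYT lam mu) (k : ℕ) : Prop :=
  ∃ x ∈ Finset.Icc (numCells lam mu - k + 1) (numCells lam mu - 1),
    (pos R x).1 = (pos R (numCells lam mu)).1 ∧
    (pos R x).2 + 1 = (pos R (numCells lam mu)).2

/-- Property (ii) for `S = {n-1, …, n-k+1}` in `R`. -/
def PropII (R : SYT lam mu) (k : ℕ) : Prop :=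
  ¬ (hasNorthNbr R k ∧ hasWestNbr R k) ∧
  (hasNorthNbr R k →
    Balanced R (Finset.Icc (numCells lam mu - k + 1) (numCells lam mu - 1))
      (northBP lam mu (pos R (numCells lam mu)))) ∧
  (hasWestNbr R k →
    Balanced R (Finset.Icc (numCells lam mu - k + 1) (numCells lam mu - 1))
      (westBP lam mu (pos R (numCells lam mu)))) ∧
  (¬ hasNorthNbr R k → ¬ hasWestNbr R k →
    Balanced R (Finset.Icc (numCells lam mu - k + 1) (numCells lam mu - 1))
      (northBP lam mu (pos R (numCells lam mu))) ∧
    Balanced R (Finset.Icc (numCells lam mu - k + 1) (numCells lam mu - 1))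
      (westBP lam mu (pos R (numCells lam mu))))

/-- The maximal `k` such that `S = {n-1, …, n-k+1}` satisfies properties
(i) and (ii) in `R`; used to define `Θ`. -/
noncomputable def kTheta (R : SYT lam mu) : ℕ :=
  sSup {k : ℕ | 1 ≤ k ∧ k ≤ numCells lam mu ∧ PropI R k ∧ PropII R k}

/-- The southwesternmost cell of `P`. -/
noncomputable def SWend (P : Finset Cell) : Cell :=
  if h : ∃ c ∈ P, ∀ d ∈ P, weakSW c d then h.choose else (0, 0)

/-- The northeasternmost cell of `P`. -/
noncomputable def NEend (P : Finset Cell) : Cell :=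
  if h : ∃ c ∈ P, ∀ d ∈ P, weakSW d c then h.choose else (0, 0)

/-- `P = pos_R({n, …, n-k+1})` for `k = kTheta R`. -/
noncomputable def PTheta (R : SYT lam mu) : Finset Cell :=
  (Finset.Icc (numCells lam mu - kTheta R + 1) (numCells lam mu)).image (pos R)

/-- `pos_R(n - k + 1)` for `k = kTheta R`. -/
noncomputable def posMTheta (R : SYT lam mu) : Cell :=
  pos R (numCells lam mu - kTheta R + 1)

/-- `Θ` moves `n` to the southwestern end exactly when: `pos_R(n)` and
`pos_R(n-k+1)` lie in different connected components of `P` and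
`pos_R(n-k+1)` is on the southwestern side, or they lie in the same
connected component and `pos_R(n-k+1)` is on the northeastern side. -/
def destIsSW (R : SYT lam mu) : Prop :=
  weakSW (posMTheta R) (posN R) ↔ ¬ sameComp (PTheta R) (posN R) (posMTheta R)

/-- The destination cell for `n` under `Θ`. -/
noncomputable def destTheta (R : SYT lam mu) : Cell :=
  if destIsSW R then SWend (PTheta R) else NEend (PTheta R)

/-- The cells of `P` weakly between the destination cell and `pos_R(n)`. -/
noncomputable def chainTheta (R : SYT lam mu) : Finset Cell :=
  (PTheta R).filter (fun c =>
    (weakSW (destTheta R) c ∧ weakSW c (posN R)) ∨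
    (weakSW (posN R) c ∧ weakSW c (destTheta R)))

/-- The filling `Θ(R)`: `n` moves from `pos_R(n)` to the destination cell,
and each entry occupying a cell of `P` strictly between them is shifted one
position in `P` closer to `pos_R(n)`; all other entries are unchanged. -/
noncomputable def thetaEntry (R : SYT lam mu) (c : Cell) : ℕ :=
  if c ∈ chainTheta R then
    if c = destTheta R then numCells lam mu
    else if destIsSW R then R.entry (nextSW (chainTheta R) c)
    else R.entry (nextNE (chainTheta R) c)
  else R.entry c

/-- The map `Θ` as a map on standard Young tableaux. -/
noncomputable def Theta (R : SYT lam mu) : SYT lam mu :=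
  if h : ∃ U : SYT lam mu, U.entry = thetaEntry R then h.choose else R

/-- A single-column rectangle with northern endpoint `Y` and southern endpoint `X`. -/
def IsColSeg (P : Finset Cell) (Y X : Cell) : Prop :=
  Y.2 = X.2 ∧ Y.1 ≤ X.1 ∧ P = (Finset.Icc Y.1 X.1).image (fun i => (i, Y.2))

/-- A single-row rectangle with western endpoint `Y` and eastern endpoint `X`. -/
def IsRowSeg (P : Finset Cell) (Y X : Cell) : Prop :=
  Y.1 = X.1 ∧ Y.2 ≤ X.2 ∧ P = (Finset.Icc Y.2 X.2).image (fun j => (Y.1, j))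

/-- A hook with northwestern corner `Y`, southern endpoint `A`, and eastern
endpoint `B` (both arms of positive length). -/
def IsHook (P : Finset Cell) (Y A B : Cell) : Prop :=
  A.2 = Y.2 ∧ Y.1 < A.1 ∧ B.1 = Y.1 ∧ Y.2 < B.2 ∧
  P = (Finset.Icc Y.1 A.1).image (fun i => (i, Y.2)) ∪
      (Finset.Icc Y.2 B.2).image (fun j => (Y.1, j))

end SkewSE

namespace SkewSE

open Finset

/-! ### Part 1: basic cell order and shape lemmas -/

lemma weakSW_iff {a b : Cell} : weakSW a b ↔ b.1 ≤ a.1 ∧ a.2 ≤ b.2 := Iff.rfl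

lemma swLT_iff {a b : Cell} :
    swLT a b ↔ b.1 ≤ a.1 ∧ a.2 ≤ b.2 ∧ (b.1 < a.1 ∨ a.2 < b.2) := by
  constructor
  · rintro ⟨⟨h1, h2⟩, hne⟩
    refine ⟨h1, h2, ?_⟩
    by_contra hc
    push_neg at hc
    exact hne (Prod.ext (by omega) (by omega))
  · rintro ⟨h1, h2, h3⟩
    refine ⟨⟨h1, h2⟩, fun h => ?_⟩
    subst h; omega

lemma weakSW_refl (a : Cell) : weakSW a a := ⟨le_refl _, le_refl _⟩

lemma weakSW_trans {a b c : Cell} (h1 : weakSW a b) (h2 : weakSW b c) : weakSW a c :=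
  ⟨h2.1.trans h1.1, h1.2.trans h2.2⟩

lemma weakSW_antisymm {a b : Cell} (h1 : weakSW a b) (h2 : weakSW b a) : a = b := by
  obtain ⟨x, y⟩ := a; obtain ⟨u, v⟩ := b
  simp only [weakSW_iff] at h1 h2
  simp only [Prod.mk.injEq]
  omega

lemma swLT_trans_weakSW {a b c : Cell} (h1 : swLT a b) (h2 : weakSW b c) : swLT a c := by
  refine ⟨weakSW_trans h1.1 h2, fun h => ?_⟩
  subst h
  exact h1.2 (weakSW_antisymm h1.1 h2)

lemma weakSW_trans_swLT {a b c : Cell} (h1 : weakSW a b) (h2 : swLT b c) : swLT a c := by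
  refine ⟨weakSW_trans h1 h2.1, fun h => ?_⟩
  subst h
  exact h2.2 (weakSW_antisymm h2.1 h1)

variable {lam mu : YoungDiagram}

lemma mem_skew_iff {c : Cell} : c ∈ skewCells lam mu ↔ c ∈ lam ∧ c ∉ mu := by
  simp [skewCells, Finset.mem_sdiff]

lemma skew_mem_lam {c : Cell} (h : c ∈ skewCells lam mu) : c ∈ lam := (mem_skew_iff.mp h).1

lemma skew_not_mem_mu {c : Cell} (h : c ∈ skewCells lam mu) : c ∉ mu := (mem_skew_iff.mp h).2

/-- Convexity of skew shapes: a cell between two cells of the shape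
(componentwise) is in the shape. -/
lemma skew_convex {a b c : Cell} (ha : a ∈ skewCells lam mu) (hb : b ∈ skewCells lam mu)
    (h1 : a.1 ≤ c.1) (h2 : c.1 ≤ b.1) (h3 : a.2 ≤ c.2) (h4 : c.2 ≤ b.2) :
    c ∈ skewCells lam mu := by
  rw [mem_skew_iff]
  constructor
  · have := skew_mem_lam hb
    obtain ⟨b1, b2⟩ := b; obtain ⟨c1, c2⟩ := c
    exact lam.up_left_mem h2 h4 this
  · intro hc
    have := skew_not_mem_mu ha
    obtain ⟨a1, a2⟩ := a; obtain ⟨c1, c2⟩ := c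
    exact this (mu.up_left_mem h1 h3 hc)

lemma mem_SEb_iff {c : Cell} :
    c ∈ SEboundary lam mu ↔ c ∈ skewCells lam mu ∧ (c.1 + 1, c.2 + 1) ∉ skewCells lam mu := by
  simp [SEboundary, Finset.mem_filter]

lemma SEb_mem_skew {c : Cell} (h : c ∈ SEboundary lam mu) : c ∈ skewCells lam mu :=
  (mem_SEb_iff.mp h).1

/-- No cell of the shape lies strictly southeast of a southeast-boundary cell. -/
lemma no_strict_SE {c d : Cell} (hc : c ∈ SEboundary lam mu) (hd : d ∈ skewCells lam mu) :
    ¬(c.1 < d.1 ∧ c.2 < d.2) := by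
  rintro ⟨h1, h2⟩
  obtain ⟨hcs, hcb⟩ := mem_SEb_iff.mp hc
  exact hcb (skew_convex hcs hd (by omega) (by omega) (by omega) (by omega))

/-- Any two boundary cells are comparable in the southwest-to-northeast order. -/
lemma SEb_comparable {c d : Cell} (hc : c ∈ SEboundary lam mu) (hd : d ∈ SEboundary lam mu) :
    weakSW c d ∨ weakSW d c := by
  have h1 := no_strict_SE hc (SEb_mem_skew hd)
  have h2 := no_strict_SE hd (SEb_mem_skew hc)
  simp only [weakSW_iff]
  omega

end SkewSE
namespace SkewSE

open Finset

variable {lam mu : YoungDiagram}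

/-! ### Part 2: SYT entry/pos lemmas -/

lemma entry_mem_Icc (T : SYT lam mu) {c : Cell} (h : c ∈ skewCells lam mu) :
    T.entry c ∈ Finset.Icc 1 (numCells lam mu) := by
  have := T.bijOn.mapsTo h
  exact_mod_cast this

lemma entry_injOn (T : SYT lam mu) {c d : Cell} (hc : c ∈ skewCells lam mu)
    (hd : d ∈ skewCells lam mu) (h : T.entry c = T.entry d) : c = d :=
  T.bijOn.injOn hc hd h

lemma pos_spec (T : SYT lam mu) {x : ℕ} (hx : x ∈ Finset.Icc 1 (numCells lam mu)) :
    pos T x ∈ skewCells lam mu ∧ T.entry (pos T x) = x := by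
  have hex : ∃ c ∈ skewCells lam mu, T.entry c = x := by
    obtain ⟨c, hc, hc2⟩ := T.bijOn.surjOn (by exact_mod_cast hx)
    exact ⟨c, hc, hc2⟩
  rw [pos, dif_pos hex]
  exact ⟨hex.choose_spec.1, hex.choose_spec.2⟩

lemma pos_mem (T : SYT lam mu) {x : ℕ} (hx : x ∈ Finset.Icc 1 (numCells lam mu)) :
    pos T x ∈ skewCells lam mu := (pos_spec T hx).1

lemma entry_pos (T : SYT lam mu) {x : ℕ} (hx : x ∈ Finset.Icc 1 (numCells lam mu)) :
    T.entry (pos T x) = x := (pos_spec T hx).2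

lemma pos_entry (T : SYT lam mu) {c : Cell} (h : c ∈ skewCells lam mu) :
    pos T (T.entry c) = c := by
  apply entry_injOn T (pos_mem T (entry_mem_Icc T h)) h
  rw [entry_pos T (entry_mem_Icc T h)]

lemma pos_injOn (T : SYT lam mu) {x y : ℕ} (hx : x ∈ Finset.Icc 1 (numCells lam mu))
    (hy : y ∈ Finset.Icc 1 (numCells lam mu)) (h : pos T x = pos T y) : x = y := by
  have := entry_pos T hx
  rw [h, entry_pos T hy] at this
  omega

lemma pos_eq_iff (T : SYT lam mu) {x : ℕ} {c : Cell} (hx : x ∈ Finset.Icc 1 (numCells lam mu))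
    (hc : c ∈ skewCells lam mu) : pos T x = c ↔ T.entry c = x := by
  constructor
  · rintro rfl; exact entry_pos T hx
  · rintro rfl; exact pos_entry T hc

/-- Entries strictly increase along a column segment of the shape. -/
lemma entry_lt_of_col (T : SYT lam mu) {i i' j : ℕ} (h : (i, j) ∈ skewCells lam mu)
    (h' : (i', j) ∈ skewCells lam mu) (hlt : i < i') :
    T.entry (i, j) < T.entry (i', j) := by
  induction i' with
  | zero => omega
  | succ i'' ih =>
    rcases Nat.lt_or_ge i i'' with hc | hc
    · have hmem : (i'', j) ∈ skewCells lam mu :=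
        skew_convex h h' (by omega) (by omega) (le_refl _) (le_refl _)
      exact lt_trans (ih hmem hc) (T.col_lt i'' j hmem h')
    · have : i = i'' := by omega
      subst this
      exact T.col_lt i j h h'

/-- Entries strictly increase along a row segment of the shape. -/
lemma entry_lt_of_row (T : SYT lam mu) {i j j' : ℕ} (h : (i, j) ∈ skewCells lam mu)
    (h' : (i, j') ∈ skewCells lam mu) (hlt : j < j') :
    T.entry (i, j) < T.entry (i, j') := by
  induction j' with
  | zero => omega
  | succ j'' ih =>
    rcases Nat.lt_or_ge j j'' with hc | hc
    · have hmem : (i, j'') ∈ skewCells lam mu :=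
        skew_convex h h' (le_refl _) (le_refl _) (by omega) (by omega)
      exact lt_trans (ih hmem hc) (T.row_lt i j'' hmem h')
    · have : j = j'' := by omega
      subst this
      exact T.row_lt i j h h'

/-- The cell of the largest entry is on the southeast boundary. -/
lemma pos_numCells_mem_SEb (T : SYT lam mu) (hn : 1 ≤ numCells lam mu) :
    pos T (numCells lam mu) ∈ SEboundary lam mu := by
  have hmem : numCells lam mu ∈ Finset.Icc 1 (numCells lam mu) := by
    simp; omega
  obtain ⟨hp, he⟩ := pos_spec T hmem
  rw [mem_SEb_iff]
  refine ⟨hp, fun hSE => ?_⟩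
  set c := pos T (numCells lam mu) with hc
  have hmid : (c.1, c.2 + 1) ∈ skewCells lam mu := by
    have : ((c.1, c.2 + 1) : Cell).1 ≤ ((c.1 + 1, c.2 + 1) : Cell).1 := by simp
    exact skew_convex hp hSE (le_refl _) (by simp) (by simp) (by simp)
  have h1 : T.entry (c.1, c.2) < T.entry (c.1, c.2 + 1) := T.row_lt c.1 c.2 (by simpa using hp) hmid
  have h2 : T.entry (c.1, c.2 + 1) < T.entry (c.1 + 1, c.2 + 1) := T.col_lt c.1 (c.2+1) hmid hSE
  have h3 := entry_mem_Icc T hSE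
  simp only [Finset.mem_Icc] at h3
  have : T.entry (c.1, c.2) = numCells lam mu := by rw [← he]
  omega

/-! ### Part 2b: minima, maxima and successors in weakSW-chains -/

/-- A finite nonempty pairwise-comparable set of cells has a southwesternmost element. -/
lemma exists_chain_min (P : Finset Cell) (hne : P.Nonempty)
    (hcomp : ∀ a ∈ P, ∀ b ∈ P, weakSW a b ∨ weakSW b a) :
    ∃ c ∈ P, ∀ d ∈ P, weakSW c d := by
  classical
  revert hcomp
  induction hne using Finset.Nonempty.cons_induction with
  | singleton a => exact fun _ => ⟨a, by simp, fun d hd => by simp at hd; subst hd; exact weakSW_refl _⟩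
  | cons a P ha hP ih =>
    intro hcomp
    obtain ⟨c, hc, hmin⟩ := ih (fun x hx y hy =>
      hcomp x (Finset.mem_cons_of_mem hx) y (Finset.mem_cons_of_mem hy))
    rcases hcomp a (Finset.mem_cons_self _ _) c (Finset.mem_cons_of_mem hc) with h | h
    · refine ⟨a, Finset.mem_cons_self _ _, fun d hd => ?_⟩
      rcases Finset.mem_cons.mp hd with rfl | hd
      · exact weakSW_refl _
      · exact weakSW_trans h (hmin d hd)
    · refine ⟨c, Finset.mem_cons_of_mem hc, fun d hd => ?_⟩
      rcases Finset.mem_cons.mp hd with rfl | hd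
      · exact h
      · exact hmin d hd

lemma exists_chain_max (P : Finset Cell) (hne : P.Nonempty)
    (hcomp : ∀ a ∈ P, ∀ b ∈ P, weakSW a b ∨ weakSW b a) :
    ∃ c ∈ P, ∀ d ∈ P, weakSW d c := by
  classical
  revert hcomp
  induction hne using Finset.Nonempty.cons_induction with
  | singleton a => exact fun _ => ⟨a, by simp, fun d hd => by simp at hd; subst hd; exact weakSW_refl _⟩
  | cons a P ha hP ih =>
    intro hcomp
    obtain ⟨c, hc, hmax⟩ := ih (fun x hx y hy =>
      hcomp x (Finset.mem_cons_of_mem hx) y (Finset.mem_cons_of_mem hy))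
    rcases hcomp a (Finset.mem_cons_self _ _) c (Finset.mem_cons_of_mem hc) with h | h
    · refine ⟨c, Finset.mem_cons_of_mem hc, fun d hd => ?_⟩
      rcases Finset.mem_cons.mp hd with rfl | hd
      · exact h
      · exact hmax d hd
    · refine ⟨a, Finset.mem_cons_self _ _, fun d hd => ?_⟩
      rcases Finset.mem_cons.mp hd with rfl | hd
      · exact weakSW_refl _
      · exact weakSW_trans (hmax d hd) h

end SkewSE
namespace SkewSE

open Finset

variable {lam mu : YoungDiagram}

/-! ### Part 3: successors, components, and `kSE` -/

lemma chain_succ_exists {P : Finset Cell}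
    (hcomp : ∀ a ∈ P, ∀ b ∈ P, weakSW a b ∨ weakSW b a) {c x : Cell} (hx : x ∈ P)
    (h : swLT c x) : ∃ d ∈ P, swLT c d ∧ ∀ e ∈ P, swLT c e → weakSW d e := by
  classical
  obtain ⟨d, hd, hmin⟩ := exists_chain_min (P.filter (fun e => swLT c e))
    ⟨x, Finset.mem_filter.mpr ⟨hx, h⟩⟩
    (fun a ha b hb => hcomp a (Finset.mem_filter.mp ha).1 b (Finset.mem_filter.mp hb).1)
  obtain ⟨hdP, hdlt⟩ := Finset.mem_filter.mp hd
  exact ⟨d, hdP, hdlt, fun e he hce => hmin e (Finset.mem_filter.mpr ⟨he, hce⟩)⟩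

lemma chain_pred_exists {P : Finset Cell}
    (hcomp : ∀ a ∈ P, ∀ b ∈ P, weakSW a b ∨ weakSW b a) {c x : Cell} (hx : x ∈ P)
    (h : swLT x c) : ∃ d ∈ P, swLT d c ∧ ∀ e ∈ P, swLT e c → weakSW e d := by
  classical
  obtain ⟨d, hd, hmax⟩ := exists_chain_max (P.filter (fun e => swLT e c))
    ⟨x, Finset.mem_filter.mpr ⟨hx, h⟩⟩
    (fun a ha b hb => hcomp a (Finset.mem_filter.mp ha).1 b (Finset.mem_filter.mp hb).1)
  obtain ⟨hdP, hdlt⟩ := Finset.mem_filter.mp hd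
  exact ⟨d, hdP, hdlt, fun e he hce => hmax e (Finset.mem_filter.mpr ⟨he, hce⟩)⟩

lemma nextNE_spec {P : Finset Cell} {c : Cell}
    (h : ∃ d ∈ P, swLT c d ∧ ∀ e ∈ P, swLT c e → weakSW d e) :
    nextNE P c ∈ P ∧ swLT c (nextNE P c) ∧ ∀ e ∈ P, swLT c e → weakSW (nextNE P c) e := by
  rw [nextNE, dif_pos h]
  exact ⟨h.choose_spec.1, h.choose_spec.2.1, h.choose_spec.2.2⟩

lemma nextSW_spec {P : Finset Cell} {c : Cell}
    (h : ∃ d ∈ P, swLT d c ∧ ∀ e ∈ P, swLT e c → weakSW e d) :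
    nextSW P c ∈ P ∧ swLT (nextSW P c) c ∧ ∀ e ∈ P, swLT e c → weakSW e (nextSW P c) := by
  rw [nextSW, dif_pos h]
  exact ⟨h.choose_spec.1, h.choose_spec.2.1, h.choose_spec.2.2⟩

lemma adjacent_symm {a b : Cell} (h : adjacent a b) : adjacent b a := by
  unfold adjacent at *
  omega

lemma sameComp_refl {P : Finset Cell} {a : Cell} (ha : a ∈ P) : sameComp P a a :=
  ⟨ha, ha, Relation.ReflTransGen.refl⟩

lemma sameComp_symm {P : Finset Cell} {a b : Cell} (h : sameComp P a b) : sameComp P b a := by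
  obtain ⟨ha, hb, hpath⟩ := h
  refine ⟨hb, ha, ?_⟩
  have hsym : Symmetric (fun x y : Cell => x ∈ P ∧ y ∈ P ∧ adjacent x y) := by
    rintro x y ⟨h1, h2, h3⟩
    exact ⟨h2, h1, adjacent_symm h3⟩
  exact (@Relation.ReflTransGen.symmetric _ _ ⟨fun a b h => hsym h⟩).symm _ _ hpath

lemma sameComp_trans {P : Finset Cell} {a b c : Cell} (h1 : sameComp P a b)
    (h2 : sameComp P b c) : sameComp P a c :=
  ⟨h1.1, h2.2.1, h1.2.2.trans h2.2.2⟩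

/-- Invariance of a predicate along connectivity paths. -/
lemma sameComp_invariant {P : Finset Cell} {Q : Cell → Prop}
    (hstep : ∀ x y : Cell, x ∈ P → y ∈ P → adjacent x y → Q x → Q y)
    {a b : Cell} (h : sameComp P a b) (ha : Q a) : Q b := by
  obtain ⟨ha', hb', hpath⟩ := h
  clear ha' hb'
  induction hpath with
  | refl => exact ha
  | tail _ hxy ih => exact hstep _ _ hxy.1 hxy.2.1 hxy.2.2 ih

lemma kSE_set_bddAbove (T : SYT lam mu) :
    BddAbove {k : ℕ | 1 ≤ k ∧ k ≤ numCells lam mu ∧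
      MinUnimodalSE T (Finset.Icc (numCells lam mu - k + 1) (numCells lam mu))} :=
  ⟨numCells lam mu, fun _ hk => hk.2.1⟩

lemma one_mem_kSE_set (T : SYT lam mu) (hn : 1 ≤ numCells lam mu) :
    1 ∈ {k : ℕ | 1 ≤ k ∧ k ≤ numCells lam mu ∧
      MinUnimodalSE T (Finset.Icc (numCells lam mu - k + 1) (numCells lam mu))} := by
  refine ⟨le_refl _, hn, ?_⟩
  have hIcc : Finset.Icc (numCells lam mu - 1 + 1) (numCells lam mu) = {numCells lam mu} := by
    have : numCells lam mu - 1 + 1 = numCells lam mu := by omega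
    rw [this, Finset.Icc_self]
  rw [hIcc]
  have hmem : numCells lam mu ∈ Finset.Icc 1 (numCells lam mu) := by simp; omega
  refine ⟨by simp, ?_, ?_, ?_, ?_, ?_⟩
  · intro x hx; simp at hx; subst hx; simp; omega
  · intro x hx; simp at hx; subst hx; exact pos_numCells_mem_SEb T hn
  · intro x hx y hy; simp at hx hy; subst hx; subst hy
    exact sameComp_refl (pos_mem T hmem)
  · intro x hx y hy; exact Or.inl (by simp at hx hy; subst hx; subst hy; exact weakSW_refl _)
  · intro x hx y hy hlt
    simp at hx hy; subst hx; subst hy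
    exact absurd rfl hlt.2

lemma kSE_mem (T : SYT lam mu) (hn : 1 ≤ numCells lam mu) :
    1 ≤ kSE T ∧ kSE T ≤ numCells lam mu ∧ MinUnimodalSE T (RcSE T) := by
  have := Nat.sSup_mem ⟨1, one_mem_kSE_set T hn⟩ (kSE_set_bddAbove T)
  exact ⟨this.1, this.2.1, this.2.2⟩

lemma le_kSE (T : SYT lam mu) {k : ℕ} (h1 : 1 ≤ k) (h2 : k ≤ numCells lam mu)
    (h3 : MinUnimodalSE T (Finset.Icc (numCells lam mu - k + 1) (numCells lam mu))) :
    k ≤ kSE T :=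
  le_csSup (kSE_set_bddAbove T) ⟨h1, h2, h3⟩

end SkewSE
namespace SkewSE

open Finset

set_option linter.unusedSectionVars false

variable {lam mu : YoungDiagram}

/-! ### Part 4: structure of `Rc`/`Rp` for `T` -/

lemma mem_Rc_iff {T : SYT lam mu} {x : ℕ} :
    x ∈ RcSE T ↔ numCells lam mu - kSE T + 1 ≤ x ∧ x ≤ numCells lam mu := by
  simp [RcSE]

lemma Rc_subset_Icc {T : SYT lam mu} : RcSE T ⊆ Finset.Icc 1 (numCells lam mu) := by
  intro x hx
  rw [mem_Rc_iff] at hx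
  simp
  omega

lemma mem_Rp_iff {T : SYT lam mu} {c : Cell} :
    c ∈ RpSE T ↔ ∃ x ∈ RcSE T, pos T x = c := by
  simp [RpSE, Finset.mem_image]

lemma pos_mem_Rp {T : SYT lam mu} {x : ℕ} (hx : x ∈ RcSE T) : pos T x ∈ RpSE T :=
  mem_Rp_iff.mpr ⟨x, hx, rfl⟩

section Unpack

variable {T : SYT lam mu} (hn : 1 ≤ numCells lam mu)

include hn

lemma n_mem_Rc : numCells lam mu ∈ RcSE T := by
  have h := kSE_mem T hn
  rw [mem_Rc_iff]; omega

lemma m_mem_Rc : numCells lam mu - kSE T + 1 ∈ RcSE T := by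
  have h := kSE_mem T hn
  rw [mem_Rc_iff]; omega

lemma Rp_boundary {c : Cell} (hc : c ∈ RpSE T) : c ∈ SEboundary lam mu := by
  obtain ⟨hne, _, hbd, _⟩ := (kSE_mem T hn).2.2
  obtain ⟨x, hx, rfl⟩ := mem_Rp_iff.mp hc
  exact hbd x hx

lemma Rp_skew {c : Cell} (hc : c ∈ RpSE T) : c ∈ skewCells lam mu :=
  SEb_mem_skew (Rp_boundary hn hc)

lemma Rp_entry_mem {c : Cell} (hc : c ∈ RpSE T) :
    T.entry c ∈ RcSE T ∧ pos T (T.entry c) = c := by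
  obtain ⟨x, hx, rfl⟩ := mem_Rp_iff.mp hc
  rw [entry_pos T (Rc_subset_Icc hx)]
  exact ⟨hx, rfl⟩

lemma Rp_comparable {a b : Cell} (ha : a ∈ RpSE T) (hb : b ∈ RpSE T) :
    weakSW a b ∨ weakSW b a :=
  SEb_comparable (Rp_boundary hn ha) (Rp_boundary hn hb)

lemma Rp_sameComp {a b : Cell} (ha : a ∈ RpSE T) (hb : b ∈ RpSE T) :
    sameComp (skewCells lam mu) a b := by
  obtain ⟨hne, _, _, hsc, _⟩ := (kSE_mem T hn).2.2
  obtain ⟨x, hx, rfl⟩ := mem_Rp_iff.mp ha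
  obtain ⟨y, hy, rfl⟩ := mem_Rp_iff.mp hb
  exact hsc x hx y hy

/-- The central min-unimodality inequality for `T` on `Rp`, cell-level form. -/
lemma Rc_clause {a b : Cell} (ha : a ∈ RpSE T) (hb : b ∈ RpSE T) (hab : swLT a b) :
    (weakSW b (Ycell T) → T.entry b < T.entry a) ∧
    (weakSW (Ycell T) a → T.entry a < T.entry b) := by
  obtain ⟨hne, hsub, _, _, _, hcl⟩ := (kSE_mem T hn).2.2
  obtain ⟨x, hx, rfl⟩ := mem_Rp_iff.mp ha
  obtain ⟨y, hy, rfl⟩ := mem_Rp_iff.mp hb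
  have hmin : (RcSE T).min' hne = numCells lam mu - kSE T + 1 := by
    apply le_antisymm
    · exact Finset.min'_le _ _ (m_mem_Rc hn)
    · exact Finset.le_min' _ _ _ (fun y hy => (mem_Rc_iff.mp hy).1)
  have := hcl x hx y hy
  rw [hmin] at this
  have hex := entry_pos T (Rc_subset_Icc hx)
  have hey := entry_pos T (Rc_subset_Icc hy)
  rw [hex, hey]
  exact this hab

/-- decreasing along the southwest arm -/
lemma T1 {a b : Cell} (ha : a ∈ RpSE T) (hb : b ∈ RpSE T) (hab : swLT a b)
    (hbY : weakSW b (Ycell T)) : T.entry b < T.entry a :=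
  (Rc_clause hn ha hb hab).1 hbY

/-- increasing along the northeast arm -/
lemma T2 {a b : Cell} (ha : a ∈ RpSE T) (hb : b ∈ RpSE T) (hab : swLT a b)
    (hYa : weakSW (Ycell T) a) : T.entry a < T.entry b :=
  (Rc_clause hn ha hb hab).2 hYa

lemma posN_mem_Rp : posN T ∈ RpSE T := pos_mem_Rp (n_mem_Rc hn)

lemma entry_posN : T.entry (posN T) = numCells lam mu :=
  entry_pos T (by simp [Finset.mem_Icc]; omega)

lemma entry_Ycell : T.entry (Ycell T) = numCells lam mu - kSE T + 1 :=
  entry_pos T (Rc_subset_Icc (m_mem_Rc hn))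

lemma Ycell_mem_Rp : Ycell T ∈ RpSE T := pos_mem_Rp (m_mem_Rc hn)

/-- Entries on `Rp` are at most `n`, equal to `n` only at `posN`. -/
lemma Rp_entry_lt {c : Cell} (hc : c ∈ RpSE T) (hne : c ≠ posN T) :
    T.entry c < numCells lam mu := by
  obtain ⟨hmem, hp⟩ := Rp_entry_mem hn hc
  have h1 := (mem_Rc_iff.mp hmem).2
  rcases lt_or_eq_of_le h1 with h | h
  · exact h
  · exfalso; apply hne
    rw [← hp, h]
    rfl

/-- The position of `n` is extremal in `Rp`. -/
lemma posN_extremal : SWmostAtN T ∨ NEmostAtN T := by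
  by_cases hsw : SWmostAtN T
  · exact Or.inl hsw
  right
  rw [SWmostAtN] at hsw
  push_neg at hsw
  obtain ⟨c, hc, hcn⟩ := hsw
  have hcpos : swLT c (posN T) := by
    rcases Rp_comparable hn hc (posN_mem_Rp hn) with h | h
    · refine ⟨h, fun he => hcn ?_⟩
      subst he; exact weakSW_refl _
    · exact absurd h hcn
  have hNB : ¬ weakSW (posN T) (Ycell T) := by
    intro hw
    have h2 := (Rc_clause hn hc (posN_mem_Rp hn) hcpos).1 hw
    have h3 := entry_posN hn (T := T)
    have h4 := Rp_entry_lt hn hc (fun he => hcpos.2 he)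
    omega
  intro d hd
  by_contra hdn
  have hdpos : swLT (posN T) d := by
    rcases Rp_comparable hn (posN_mem_Rp hn) hd with h | h
    · refine ⟨h, fun he => hdn ?_⟩
      rw [← he]; exact weakSW_refl _
    · exact absurd h hdn
  have h2 := (Rc_clause hn (posN_mem_Rp hn) hd hdpos).2
  rcases Rp_comparable hn (Ycell_mem_Rp hn (T := T)) (posN_mem_Rp hn) with h | h
  · have h5 := h2 h
    have h3 := entry_posN hn (T := T)
    have h4 := Rp_entry_lt hn hd (fun he => hdpos.2 he.symm)
    omega
  · exact hNB h

end Unpack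

end SkewSE
namespace SkewSE

open Finset

set_option linter.unusedSectionVars false

variable {lam mu : YoungDiagram}

/-! ### Part 5: the rotation dictionary in Case A (`posN` southwesternmost) -/

lemma southEnd_exists {P : Finset Cell} {Y : Cell} (hY : Y ∈ P) :
    ∃ c ∈ P, c.2 = Y.2 ∧ ∀ d ∈ P, d.2 = Y.2 → d.1 ≤ c.1 := by
  classical
  obtain ⟨c, hc, hmax⟩ := Finset.exists_max_image (P.filter (fun d => d.2 = Y.2))
    (fun d => d.1) ⟨Y, by simp [hY]⟩
  refine ⟨c, (Finset.mem_filter.mp hc).1, (Finset.mem_filter.mp hc).2,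
    fun d hd hd2 => hmax d (Finset.mem_filter.mpr ⟨hd, hd2⟩)⟩

lemma eastEnd_exists {P : Finset Cell} {Y : Cell} (hY : Y ∈ P) :
    ∃ c ∈ P, c.1 = Y.1 ∧ ∀ d ∈ P, d.1 = Y.1 → d.2 ≤ c.2 := by
  classical
  obtain ⟨c, hc, hmax⟩ := Finset.exists_max_image (P.filter (fun d => d.1 = Y.1))
    (fun d => d.2) ⟨Y, by simp [hY]⟩
  refine ⟨c, (Finset.mem_filter.mp hc).1, (Finset.mem_filter.mp hc).2,
    fun d hd hd2 => hmax d (Finset.mem_filter.mpr ⟨hd, hd2⟩)⟩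

lemma southEnd_spec {P : Finset Cell} {Y : Cell}
    (h : ∃ c ∈ P, c.2 = Y.2 ∧ ∀ d ∈ P, d.2 = Y.2 → d.1 ≤ c.1) :
    southEnd P Y ∈ P ∧ (southEnd P Y).2 = Y.2 ∧
      ∀ d ∈ P, d.2 = Y.2 → d.1 ≤ (southEnd P Y).1 := by
  rw [southEnd, dif_pos h]
  exact ⟨h.choose_spec.1, h.choose_spec.2.1, h.choose_spec.2.2⟩

lemma eastEnd_spec {P : Finset Cell} {Y : Cell}
    (h : ∃ c ∈ P, c.1 = Y.1 ∧ ∀ d ∈ P, d.1 = Y.1 → d.2 ≤ c.2) :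
    eastEnd P Y ∈ P ∧ (eastEnd P Y).1 = Y.1 ∧
      ∀ d ∈ P, d.1 = Y.1 → d.2 ≤ (eastEnd P Y).2 := by
  rw [eastEnd, dif_pos h]
  exact ⟨h.choose_spec.1, h.choose_spec.2.1, h.choose_spec.2.2⟩

section CaseA

variable {T R : SYT lam mu} (hn : 1 ≤ numCells lam mu)
  (hR : R.entry = rotEntry T) (hA : SWmostAtN T)

include hn hR hA

omit hR in
lemma Xend_mem_Rp : Xend T ∈ RpSE T := by
  rw [Xend, if_pos hA]
  split
  · exact (southEnd_spec (southEnd_exists (Ycell_mem_Rp hn))).1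
  · exact (eastEnd_spec (eastEnd_exists (Ycell_mem_Rp hn))).1

omit hR in
lemma mem_chain_iff {c : Cell} :
    c ∈ chainSE T ↔ c ∈ RpSE T ∧ weakSW c (Xend T) := by
  unfold chainSE
  rw [Finset.mem_filter]
  constructor
  · rintro ⟨hc, h | h⟩
    · exact ⟨hc, h.2⟩
    · have hce : c = posN T := weakSW_antisymm h.2 (hA c hc)
      have hXp : Xend T = posN T :=
        weakSW_antisymm (hce ▸ h.1) (hA _ (Xend_mem_Rp hn hA))
      refine ⟨hc, ?_⟩
      rw [hce, hXp]
      exact weakSW_refl _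
  · rintro ⟨hc, h⟩
    exact ⟨hc, Or.inl ⟨hA c hc, h⟩⟩

omit hR in
lemma chain_sub_Rp : chainSE T ⊆ RpSE T := fun c hc => ((mem_chain_iff hn hA).mp hc).1

omit hR in
lemma X_mem_chain : Xend T ∈ chainSE T :=
  (mem_chain_iff hn hA).mpr ⟨Xend_mem_Rp hn hA, weakSW_refl _⟩

omit hR in
lemma posN_mem_chain : posN T ∈ chainSE T :=
  (mem_chain_iff hn hA).mpr ⟨posN_mem_Rp hn, hA _ (Xend_mem_Rp hn hA)⟩

omit hR in
lemma chain_comparable : ∀ a ∈ chainSE T, ∀ b ∈ chainSE T, weakSW a b ∨ weakSW b a :=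
  fun a ha b hb => Rp_comparable hn (chain_sub_Rp hn hA ha) (chain_sub_Rp hn hA hb)

omit hR in
lemma succ_spec {c : Cell} (hc : c ∈ chainSE T) (hne : c ≠ Xend T) :
    nextNE (chainSE T) c ∈ chainSE T ∧ swLT c (nextNE (chainSE T) c) ∧
      ∀ e ∈ chainSE T, swLT c e → weakSW (nextNE (chainSE T) c) e := by
  apply nextNE_spec
  exact chain_succ_exists (chain_comparable hn hA) (X_mem_chain hn hA)
    ⟨((mem_chain_iff hn hA).mp hc).2, hne⟩

omit hA in
lemma R_entry_off {c : Cell} (hc : c ∉ chainSE T) : R.entry c = T.entry c := by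
  rw [hR]; unfold rotEntry; rw [if_neg hc]

lemma R_entry_X : R.entry (Xend T) = numCells lam mu := by
  rw [hR]; unfold rotEntry; rw [if_pos (X_mem_chain hn hA), if_pos rfl]

lemma R_entry_chain {c : Cell} (hc : c ∈ chainSE T) (hne : c ≠ Xend T) :
    R.entry c = T.entry (nextNE (chainSE T) c) := by
  rw [hR]; unfold rotEntry; rw [if_pos hc, if_neg hne, if_pos hA]

lemma posR_N : pos R (numCells lam mu) = Xend T :=
  (pos_eq_iff R (by simp; omega) (Rp_skew hn (Xend_mem_Rp hn hA))).mpr (R_entry_X hn hR hA)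

lemma pred_spec {d : Cell} (hd : d ∈ chainSE T) (hne : d ≠ posN T) :
    nextSW (chainSE T) d ∈ chainSE T ∧ swLT (nextSW (chainSE T) d) d ∧
      (∀ e ∈ chainSE T, swLT e d → weakSW e (nextSW (chainSE T) d)) ∧
      nextNE (chainSE T) (nextSW (chainSE T) d) = d ∧
      R.entry (nextSW (chainSE T) d) = T.entry d := by
  have hpd : swLT (posN T) d := by
    refine ⟨hA d (chain_sub_Rp hn hA hd), fun h => hne h.symm⟩
  have hs := nextSW_spec (chain_pred_exists (chain_comparable hn hA) (posN_mem_chain hn hA) hpd)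
  set p := nextSW (chainSE T) d with hp
  have hpX : p ≠ Xend T := by
    intro he
    have h1 : weakSW d (Xend T) := ((mem_chain_iff hn hA).mp hd).2
    have h2 : weakSW p d := hs.2.1.1
    rw [he] at h2
    exact hs.2.1.2 (he.trans (weakSW_antisymm h2 h1))
  have hss := succ_spec hn hA hs.1 hpX
  have h1 : weakSW (nextNE (chainSE T) p) d := hss.2.2 d hd hs.2.1
  have heq : nextNE (chainSE T) p = d := by
    by_contra hne2
    have h2 : swLT (nextNE (chainSE T) p) d := ⟨h1, hne2⟩
    have h3 := hs.2.2 _ hss.1 h2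
    exact hss.2.1.2 (weakSW_antisymm hss.2.1.1 h3)
  refine ⟨hs.1, hs.2.1, hs.2.2, heq, ?_⟩
  rw [R_entry_chain hn hR hA hs.1 hpX, heq]

lemma posR_of_chain {d : Cell} (hd : d ∈ chainSE T) (hne : d ≠ posN T) :
    pos R (T.entry d) = nextSW (chainSE T) d := by
  have hs := pred_spec hn hR hA hd hne
  exact (pos_eq_iff R (entry_mem_Icc T (Rp_skew hn (chain_sub_Rp hn hA hd)))
    (Rp_skew hn (chain_sub_Rp hn hA hs.1))).mpr hs.2.2.2.2

omit hA in
lemma posR_of_offchain {c : Cell} (hc : c ∈ skewCells lam mu) (hcc : c ∉ chainSE T) :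
    pos R (T.entry c) = c :=
  (pos_eq_iff R (entry_mem_Icc T hc) hc).mpr (R_entry_off hn hR hcc)

omit hR hA in
lemma posT_not_chain_of_not_Rc {x : ℕ} (hx : x ∈ Finset.Icc 1 (numCells lam mu))
    (hnot : x ∉ RcSE T) : pos T x ∉ chainSE T := by
  intro hc
  have h1 : pos T x ∈ RpSE T := by
    unfold chainSE at hc
    exact (Finset.mem_filter.mp hc).1
  have h2 := (Rp_entry_mem hn h1).1
  rw [entry_pos T hx] at h2
  exact hnot h2

omit hA in
lemma posR_eq_posT_of_not_Rc {x : ℕ} (hx : x ∈ Finset.Icc 1 (numCells lam mu))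
    (hnot : x ∉ RcSE T) : pos R x = pos T x := by
  have := posR_of_offchain hn hR (pos_mem T hx) (posT_not_chain_of_not_Rc hn hx hnot)
  rwa [entry_pos T hx] at this

lemma R_entry_Rp_mem {c : Cell} (hc : c ∈ RpSE T) : R.entry c ∈ RcSE T := by
  by_cases hch : c ∈ chainSE T
  · by_cases hX : c = Xend T
    · rw [hX, R_entry_X hn hR hA]
      exact n_mem_Rc hn
    · rw [R_entry_chain hn hR hA hch hX]
      exact (Rp_entry_mem hn (chain_sub_Rp hn hA (succ_spec hn hA hch hX).1)).1
  · rw [R_entry_off hn hR hch]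
    exact (Rp_entry_mem hn hc).1

lemma posR_mem_Rp {x : ℕ} (hx : x ∈ RcSE T) : pos R x ∈ RpSE T := by
  by_cases hxn : x = numCells lam mu
  · rw [hxn, posR_N hn hR hA]
    exact Xend_mem_Rp hn hA
  · by_cases hch : pos T x ∈ chainSE T
    · have hne : pos T x ≠ posN T := by
        intro h
        exact hxn (pos_injOn T (Rc_subset_Icc hx) (by simp; omega) h)
      have := posR_of_chain hn hR hA hch hne
      rw [entry_pos T (Rc_subset_Icc hx)] at this
      rw [this]
      exact chain_sub_Rp hn hA (pred_spec hn hR hA hch hne).1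
    · have := posR_of_offchain hn hR (pos_mem T (Rc_subset_Icc hx)) hch
      rw [entry_pos T (Rc_subset_Icc hx)] at this
      rw [this]
      exact pos_mem_Rp hx

omit hA in
lemma posR_not_mem_Rp {x : ℕ} (hx : x ∈ Finset.Icc 1 (numCells lam mu))
    (hnot : x ∉ RcSE T) : pos R x ∉ RpSE T := by
  rw [posR_eq_posT_of_not_Rc hn hR hx hnot]
  intro h
  have := (Rp_entry_mem hn h).1
  rw [entry_pos T hx] at this
  exact hnot this

lemma posR_ne_X {x : ℕ} (hx : x ∈ RcSE T) (hne : x ≠ numCells lam mu) :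
    pos R x ≠ Xend T := by
  intro h
  rw [← posR_N hn hR hA] at h
  exact hne (pos_injOn R (Rc_subset_Icc hx) (by simp; omega) h)

lemma R_entry_Rp_ne {c : Cell} (hc : c ∈ RpSE T) (hne : c ≠ Xend T) :
    R.entry c ≠ numCells lam mu := by
  intro h
  apply hne
  have := pos_entry R (Rp_skew hn hc)
  rw [h, posR_N hn hR hA] at this
  exact this.symm

end CaseA

end SkewSE
namespace SkewSE

open Finset

set_option linter.unusedSectionVars false

variable {lam mu : YoungDiagram}

/-! ### Part 6: position of `m` in `R`, and monotonicity of `R`-entries on `Rp` -/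

section CaseA

variable {T R : SYT lam mu} (hn : 1 ≤ numCells lam mu)
  (hR : R.entry = rotEntry T) (hA : SWmostAtN T)

include hn hR hA

omit hR hA in
lemma m_mem_Icc1 : numCells lam mu - kSE T + 1 ∈ Finset.Icc 1 (numCells lam mu) :=
  Rc_subset_Icc (m_mem_Rc hn)

omit hR in
lemma Ym_not_chain (hYX : ¬ weakSW (Ycell T) (Xend T)) : Ycell T ∉ chainSE T :=
  fun h => hYX ((mem_chain_iff hn hA).mp h).2

omit hA in
lemma posR_m_case1' (hnc : Ycell T ∉ chainSE T) :
    pos R (numCells lam mu - kSE T + 1) = Ycell T := by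
  have := posR_of_offchain hn hR (Rp_skew hn (Ycell_mem_Rp hn)) hnc
  rwa [entry_Ycell hn] at this

lemma posR_m_case1 (hYX : ¬ weakSW (Ycell T) (Xend T)) :
    pos R (numCells lam mu - kSE T + 1) = Ycell T :=
  posR_m_case1' hn hR (Ym_not_chain hn hA hYX)

omit hR hA in
lemma Ym_ne_posN (hk : 2 ≤ kSE T) : Ycell T ≠ posN T := by
  intro h
  have h2 := pos_injOn T (Rc_subset_Icc (m_mem_Rc hn)) (by simp; omega) h
  have hk2 := kSE_mem T hn
  omega

omit hR in
lemma Ym_mem_chain (hYX : weakSW (Ycell T) (Xend T)) : Ycell T ∈ chainSE T :=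
  (mem_chain_iff hn hA).mpr ⟨Ycell_mem_Rp hn, hYX⟩

lemma posR_m_case2 (hk : 2 ≤ kSE T) (hYX : weakSW (Ycell T) (Xend T)) :
    pos R (numCells lam mu - kSE T + 1) = nextSW (chainSE T) (Ycell T) := by
  have := posR_of_chain hn hR hA (Ym_mem_chain hn hA hYX) (Ym_ne_posN hn hk)
  rwa [entry_Ycell hn] at this

omit hR in
lemma P_max (hk : 2 ≤ kSE T) (hYX : weakSW (Ycell T) (Xend T)) :
    ∀ c ∈ RpSE T, swLT c (Ycell T) → weakSW c (nextSW (chainSE T) (Ycell T)) := by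
  intro c hc hlt
  have hcch : c ∈ chainSE T :=
    (mem_chain_iff hn hA).mpr ⟨hc, weakSW_trans hlt.1 hYX⟩
  have hpd : swLT (posN T) (Ycell T) :=
    ⟨hA _ (Ycell_mem_Rp hn), fun h => Ym_ne_posN hn hk h.symm⟩
  have hs := nextSW_spec (chain_pred_exists (chain_comparable hn hA)
    (posN_mem_chain hn hA) hpd)
  exact hs.2.2 c hcch hlt

lemma R_entry_mem_S {c : Cell} (hc : c ∈ RpSE T) (hne : c ≠ Xend T) :
    numCells lam mu - kSE T + 1 ≤ R.entry c ∧ R.entry c ≤ numCells lam mu - 1 := by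
  have h1 := mem_Rc_iff.mp (R_entry_Rp_mem hn hR hA hc)
  have h2 := R_entry_Rp_ne hn hR hA hc hne
  omega

/-- Along the southwest side of the min-cell of `R`, `R`-entries decrease to the northeast. -/
lemma CL1 (hk : 2 ≤ kSE T) {c c' : Cell} (hc : c ∈ RpSE T) (hc' : c' ∈ RpSE T)
    (hcX : c ≠ Xend T) (hc'X : c' ≠ Xend T) (hlt : swLT c c')
    (hle : weakSW c' (pos R (numCells lam mu - kSE T + 1))) :
    R.entry c' < R.entry c := by
  by_cases hYX : weakSW (Ycell T) (Xend T)
  · rw [posR_m_case2 hn hR hA hk hYX] at hle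
    have hYc := Ym_mem_chain hn hA hYX
    have hpred := pred_spec hn hR hA hYc (Ym_ne_posN hn hk)
    have hc'ch : c' ∈ chainSE T := (mem_chain_iff hn hA).mpr
      ⟨hc', weakSW_trans hle ((mem_chain_iff hn hA).mp hpred.1).2⟩
    have hcch : c ∈ chainSE T := (mem_chain_iff hn hA).mpr
      ⟨hc, weakSW_trans hlt.1 ((mem_chain_iff hn hA).mp hc'ch).2⟩
    rw [R_entry_chain hn hR hA hcch hcX, R_entry_chain hn hR hA hc'ch hc'X]
    have hsc := succ_spec hn hA hcch hcX
    have hsc' := succ_spec hn hA hc'ch hc'X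
    have h2 : swLT (nextNE (chainSE T) c) (nextNE (chainSE T) c') :=
      weakSW_trans_swLT (hsc.2.2 c' hc'ch hlt) hsc'.2.1
    have h3 : swLT c' (Ycell T) := swLT_trans_weakSW (weakSW_trans_swLT hle hpred.2.1) (weakSW_refl _)
    have h4 : weakSW (nextNE (chainSE T) c') (Ycell T) := hsc'.2.2 (Ycell T) hYc h3
    exact T1 hn (chain_sub_Rp hn hA hsc.1) (chain_sub_Rp hn hA hsc'.1) h2 h4
  · rw [posR_m_case1 hn hR hA hYX] at hle
    have hXY : weakSW (Xend T) (Ycell T) := by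
      rcases Rp_comparable hn (Ycell_mem_Rp hn) (Xend_mem_Rp hn hA) with h | h
      · exact absurd h hYX
      · exact h
    by_cases hc'ch : c' ∈ chainSE T
    · have hcch : c ∈ chainSE T := (mem_chain_iff hn hA).mpr
        ⟨hc, weakSW_trans hlt.1 ((mem_chain_iff hn hA).mp hc'ch).2⟩
      rw [R_entry_chain hn hR hA hcch hcX, R_entry_chain hn hR hA hc'ch hc'X]
      have hsc := succ_spec hn hA hcch hcX
      have hsc' := succ_spec hn hA hc'ch hc'X
      have h2 : swLT (nextNE (chainSE T) c) (nextNE (chainSE T) c') :=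
        weakSW_trans_swLT (hsc.2.2 c' hc'ch hlt) hsc'.2.1
      have h4 : weakSW (nextNE (chainSE T) c') (Ycell T) :=
        weakSW_trans (hsc'.2.2 (Xend T) (X_mem_chain hn hA)
          ⟨((mem_chain_iff hn hA).mp hc'ch).2, hc'X⟩) hXY
      exact T1 hn (chain_sub_Rp hn hA hsc.1) (chain_sub_Rp hn hA hsc'.1) h2 h4
    · rw [R_entry_off hn hR hc'ch]
      have hXc' : swLT (Xend T) c' := by
        rcases Rp_comparable hn hc' (Xend_mem_Rp hn hA) with h | h
        · exact absurd ((mem_chain_iff hn hA).mpr ⟨hc', h⟩) hc'ch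
        · exact ⟨h, fun he => hc'X he.symm⟩
      by_cases hcch : c ∈ chainSE T
      · rw [R_entry_chain hn hR hA hcch hcX]
        have hsc := succ_spec hn hA hcch hcX
        have h5 : swLT (nextNE (chainSE T) c) c' :=
          weakSW_trans_swLT (hsc.2.2 (Xend T) (X_mem_chain hn hA)
            ⟨((mem_chain_iff hn hA).mp hcch).2, hcX⟩) hXc'
        exact T1 hn (chain_sub_Rp hn hA hsc.1) hc' h5 hle
      · rw [R_entry_off hn hR hcch]
        exact T1 hn hc hc' hlt hle

/-- Along the northeast side of the min-cell of `R`, `R`-entries increase to the northeast. -/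
lemma CL2 (hk : 2 ≤ kSE T) {c c' : Cell} (hc : c ∈ RpSE T) (hc' : c' ∈ RpSE T)
    (hcX : c ≠ Xend T) (hc'X : c' ≠ Xend T) (hlt : swLT c c')
    (hle : weakSW (pos R (numCells lam mu - kSE T + 1)) c) :
    R.entry c < R.entry c' := by
  by_cases hYX : weakSW (Ycell T) (Xend T)
  · rw [posR_m_case2 hn hR hA hk hYX] at hle
    have hYc := Ym_mem_chain hn hA hYX
    have hpred := pred_spec hn hR hA hYc (Ym_ne_posN hn hk)
    by_cases hcch : c ∈ chainSE T
    · have hYsucc : weakSW (Ycell T) (nextNE (chainSE T) c) := by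
        by_cases hcP : c = nextSW (chainSE T) (Ycell T)
        · rw [hcP, hpred.2.2.2.1]
          exact weakSW_refl _
        · have hPc : swLT (nextSW (chainSE T) (Ycell T)) c := ⟨hle, fun h => hcP h.symm⟩
          have hnc : ¬ swLT c (Ycell T) := by
            intro hcY
            have h6 := P_max hn hA hk hYX c (chain_sub_Rp hn hA hcch) hcY
            exact hcP (weakSW_antisymm h6 hle)
          have hYmc : weakSW (Ycell T) c := by
            rcases Rp_comparable hn (chain_sub_Rp hn hA hcch) (Ycell_mem_Rp hn) with h | h
            · by_cases he : c = Ycell T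
              · rw [he]; exact weakSW_refl _
              · exact absurd ⟨h, he⟩ hnc
            · exact h
          exact weakSW_trans hYmc (succ_spec hn hA hcch hcX).2.1.1
      by_cases hc'ch : c' ∈ chainSE T
      · rw [R_entry_chain hn hR hA hcch hcX, R_entry_chain hn hR hA hc'ch hc'X]
        have hsc := succ_spec hn hA hcch hcX
        have hsc' := succ_spec hn hA hc'ch hc'X
        have h2 : swLT (nextNE (chainSE T) c) (nextNE (chainSE T) c') :=
          weakSW_trans_swLT (hsc.2.2 c' hc'ch hlt) hsc'.2.1
        exact T2 hn (chain_sub_Rp hn hA hsc.1) (chain_sub_Rp hn hA hsc'.1) h2 hYsucc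
      · rw [R_entry_chain hn hR hA hcch hcX, R_entry_off hn hR hc'ch]
        have hXc' : swLT (Xend T) c' := by
          rcases Rp_comparable hn hc' (Xend_mem_Rp hn hA) with h | h
          · exact absurd ((mem_chain_iff hn hA).mpr ⟨hc', h⟩) hc'ch
          · exact ⟨h, fun he => hc'X he.symm⟩
        have hsc := succ_spec hn hA hcch hcX
        have h5 : swLT (nextNE (chainSE T) c) c' :=
          weakSW_trans_swLT (hsc.2.2 (Xend T) (X_mem_chain hn hA)
            ⟨((mem_chain_iff hn hA).mp hcch).2, hcX⟩) hXc'
        exact T2 hn (chain_sub_Rp hn hA hsc.1) hc' h5 hYsucc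
    · have hXc : swLT (Xend T) c := by
        rcases Rp_comparable hn hc (Xend_mem_Rp hn hA) with h | h
        · exact absurd ((mem_chain_iff hn hA).mpr ⟨hc, h⟩) hcch
        · exact ⟨h, fun he => hcX he.symm⟩
      have hYmc : weakSW (Ycell T) c := weakSW_trans hYX hXc.1
      by_cases hc'ch : c' ∈ chainSE T
      · exfalso
        have h7 : weakSW c' c := weakSW_trans ((mem_chain_iff hn hA).mp hc'ch).2 hXc.1
        exact hlt.2 (weakSW_antisymm hlt.1 h7)
      · rw [R_entry_off hn hR hcch, R_entry_off hn hR hc'ch]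
        exact T2 hn hc hc' hlt hYmc
  · rw [posR_m_case1 hn hR hA hYX] at hle
    have hccho : c ∉ chainSE T := by
      intro h
      exact hYX (weakSW_trans hle ((mem_chain_iff hn hA).mp h).2)
    have hc'cho : c' ∉ chainSE T := by
      intro h
      exact hYX (weakSW_trans (weakSW_trans hle hlt.1) ((mem_chain_iff hn hA).mp h).2)
    rw [R_entry_off hn hR hccho, R_entry_off hn hR hc'cho]
    exact T2 hn hc hc' hlt hle

end CaseA

end SkewSE
namespace SkewSE

open Finset

set_option linter.unusedSectionVars false

variable {lam mu : YoungDiagram}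

/-! ### Part 7: balance points, geometric helpers, and Property (i) -/

lemma northBP_exists {Z : Cell} (hZ : Z ∈ SEboundary lam mu) :
    ∃ c ∈ SEboundary lam mu, c.2 = Z.2 ∧ c.1 ≤ Z.1 ∧
      ∀ d ∈ SEboundary lam mu, d.2 = Z.2 → d.1 ≤ Z.1 → c.1 ≤ d.1 := by
  classical
  obtain ⟨c, hc, hmin⟩ := Finset.exists_min_image
    ((SEboundary lam mu).filter (fun d => d.2 = Z.2 ∧ d.1 ≤ Z.1)) (fun d => d.1)
    ⟨Z, by simp [hZ]⟩
  obtain ⟨h1, h2, h3⟩ := Finset.mem_filter.mp hc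
  exact ⟨c, h1, h2, h3, fun d hd hd2 hd3 => hmin d (Finset.mem_filter.mpr ⟨hd, hd2, hd3⟩)⟩

lemma westBP_exists {Z : Cell} (hZ : Z ∈ SEboundary lam mu) :
    ∃ c ∈ SEboundary lam mu, c.1 = Z.1 ∧ c.2 ≤ Z.2 ∧
      ∀ d ∈ SEboundary lam mu, d.1 = Z.1 → d.2 ≤ Z.2 → c.2 ≤ d.2 := by
  classical
  obtain ⟨c, hc, hmin⟩ := Finset.exists_min_image
    ((SEboundary lam mu).filter (fun d => d.1 = Z.1 ∧ d.2 ≤ Z.2)) (fun d => d.2)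
    ⟨Z, by simp [hZ]⟩
  obtain ⟨h1, h2, h3⟩ := Finset.mem_filter.mp hc
  exact ⟨c, h1, h2, h3, fun d hd hd2 hd3 => hmin d (Finset.mem_filter.mpr ⟨hd, hd2, hd3⟩)⟩

lemma northBP_spec {Z : Cell} (hZ : Z ∈ SEboundary lam mu) :
    northBP lam mu Z ∈ SEboundary lam mu ∧ (northBP lam mu Z).2 = Z.2 ∧
      (northBP lam mu Z).1 ≤ Z.1 ∧
      ∀ d ∈ SEboundary lam mu, d.2 = Z.2 → d.1 ≤ Z.1 → (northBP lam mu Z).1 ≤ d.1 := by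
  rw [northBP, dif_pos (northBP_exists hZ)]
  have h := (northBP_exists hZ).choose_spec
  exact ⟨h.1, h.2.1, h.2.2.1, h.2.2.2⟩

lemma westBP_spec {Z : Cell} (hZ : Z ∈ SEboundary lam mu) :
    westBP lam mu Z ∈ SEboundary lam mu ∧ (westBP lam mu Z).1 = Z.1 ∧
      (westBP lam mu Z).2 ≤ Z.2 ∧
      ∀ d ∈ SEboundary lam mu, d.1 = Z.1 → d.2 ≤ Z.2 → (westBP lam mu Z).2 ≤ d.2 := by
  rw [westBP, dif_pos (westBP_exists hZ)]
  have h := (westBP_exists hZ).choose_spec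
  exact ⟨h.1, h.2.1, h.2.2.1, h.2.2.2⟩

section CaseA

variable {T R : SYT lam mu} (hn : 1 ≤ numCells lam mu)
  (hR : R.entry = rotEntry T) (hA : SWmostAtN T)

include hn

lemma Rp_entry_ge_m {c : Cell} (hc : c ∈ RpSE T) :
    numCells lam mu - kSE T + 1 ≤ T.entry c :=
  (mem_Rc_iff.mp (Rp_entry_mem hn hc).1).1

lemma mem_Rp_of_entry {c : Cell} (hc : c ∈ skewCells lam mu)
    (h1 : numCells lam mu - kSE T + 1 ≤ T.entry c) : c ∈ RpSE T := by
  have h2 := entry_mem_Icc T hc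
  simp only [Finset.mem_Icc] at h2
  have : T.entry c ∈ RcSE T := mem_Rc_iff.mpr ⟨h1, h2.2⟩
  rw [← pos_entry T hc]
  exact pos_mem_Rp this

/-- No cell of `Rp` lies strictly north of `Ycell` in its column. -/
lemma no_Rp_north_Ym {c : Cell} (hc : c ∈ RpSE T) (hcol : c.2 = (Ycell T).2) :
    (Ycell T).1 ≤ c.1 := by
  by_contra hlt
  push_neg at hlt
  have hcs : c ∈ skewCells lam mu := Rp_skew hn hc
  have hYs : Ycell T ∈ skewCells lam mu := Rp_skew hn (Ycell_mem_Rp hn)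
  have h1 : T.entry (c.1, (Ycell T).2) < T.entry ((Ycell T).1, (Ycell T).2) := by
    apply entry_lt_of_col T _ _ hlt
    · rw [show ((c.1, (Ycell T).2) : Cell) = c by rw [← hcol]]
      exact hcs
    · rw [show (((Ycell T).1, (Ycell T).2) : Cell) = Ycell T by rfl]
      exact hYs
  rw [show ((c.1, (Ycell T).2) : Cell) = c by rw [← hcol],
    show (((Ycell T).1, (Ycell T).2) : Cell) = Ycell T by rfl, entry_Ycell hn] at h1
  have := Rp_entry_ge_m hn hc
  omega

/-- No cell of `Rp` lies strictly west of `Ycell` in its row. -/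
lemma no_Rp_west_Ym {c : Cell} (hc : c ∈ RpSE T) (hrow : c.1 = (Ycell T).1) :
    (Ycell T).2 ≤ c.2 := by
  by_contra hlt
  push_neg at hlt
  have hcs : c ∈ skewCells lam mu := Rp_skew hn hc
  have hYs : Ycell T ∈ skewCells lam mu := Rp_skew hn (Ycell_mem_Rp hn)
  have h1 : T.entry ((Ycell T).1, c.2) < T.entry ((Ycell T).1, (Ycell T).2) := by
    apply entry_lt_of_row T _ _ hlt
    · rw [show (((Ycell T).1, c.2) : Cell) = c by rw [← hrow]]
      exact hcs
    · exact hYs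
  rw [show (((Ycell T).1, c.2) : Cell) = c by rw [← hrow],
    show (((Ycell T).1, (Ycell T).2) : Cell) = Ycell T by rfl, entry_Ycell hn] at h1
  have := Rp_entry_ge_m hn hc
  omega

include hR hA

omit hR in
lemma S_sub_Rc {x : ℕ}
    (hx : x ∈ Finset.Icc (numCells lam mu - kSE T + 1) (numCells lam mu - 1)) :
    x ∈ RcSE T ∧ x ≠ numCells lam mu ∧ x ∈ Finset.Icc 1 (numCells lam mu) := by
  have h := kSE_mem T hn
  simp only [Finset.mem_Icc] at hx ⊢
  rw [mem_Rc_iff]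
  omega

lemma posR_S_mem {x : ℕ}
    (hx : x ∈ Finset.Icc (numCells lam mu - kSE T + 1) (numCells lam mu - 1)) :
    pos R x ∈ RpSE T ∧ pos R x ≠ Xend T ∧ R.entry (pos R x) = x := by
  obtain ⟨h1, h2, h3⟩ := S_sub_Rc hn hA hx
  exact ⟨posR_mem_Rp hn hR hA h1, posR_ne_X hn hR hA h1 h2, entry_pos R h3⟩

/-- Property (i) holds for `R` with `k = kSE T`. -/
lemma propI_caseA : PropI R (kSE T) := by
  intro hne
  have hk2 : 2 ≤ kSE T := by
    obtain ⟨x, hx⟩ := hne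
    have h := kSE_mem T hn
    simp only [Finset.mem_Icc] at hx
    omega
  constructor
  · refine ⟨hne, ?_, ?_, ?_, ?_, ?_⟩
    · intro x hx
      exact (S_sub_Rc hn hA hx).2.2
    · intro x hx
      exact Rp_boundary hn (posR_S_mem hn hR hA hx).1
    · intro x hx y hy
      exact Rp_sameComp hn (posR_S_mem hn hR hA hx).1 (posR_S_mem hn hR hA hy).1
    · intro x hx y hy
      exact Rp_comparable hn (posR_S_mem hn hR hA hx).1 (posR_S_mem hn hR hA hy).1
    · intro x hx y hy hlt
      have hminS : (Finset.Icc (numCells lam mu - kSE T + 1) (numCells lam mu - 1)).min' hne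
          = numCells lam mu - kSE T + 1 := by
        apply le_antisymm
        · apply Finset.min'_le
          simp only [Finset.mem_Icc]
          have h := kSE_mem T hn
          omega
        · apply Finset.le_min'
          intro y hy
          exact (Finset.mem_Icc.mp hy).1
      rw [hminS]
      obtain ⟨hxRp, hxX, hxe⟩ := posR_S_mem hn hR hA hx
      obtain ⟨hyRp, hyX, hye⟩ := posR_S_mem hn hR hA hy
      constructor
      · intro hw
        have := CL1 hn hR hA hk2 hxRp hyRp hxX hyX hlt hw
        rwa [hxe, hye] at this
      · intro hw
        have := CL2 hn hR hA hk2 hxRp hyRp hxX hyX hlt hw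
        rwa [hxe, hye] at this
  · intro x hx
    rw [posR_N hn hR hA]
    exact Rp_sameComp hn (posR_S_mem hn hR hA hx).1 (Xend_mem_Rp hn hA)

end CaseA

end SkewSE
namespace SkewSE

open Finset

set_option linter.unusedSectionVars false

variable {lam mu : YoungDiagram}

/-! ### Part 8: Property (ii) in case A1 -/

section CaseA

variable {T R : SYT lam mu} (hn : 1 ≤ numCells lam mu)
  (hR : R.entry = rotEntry T) (hA : SWmostAtN T)

include hn hA

lemma Xend_A1_eq (hS : ∃ c ∈ RpSE T, c.2 = (Ycell T).2 ∧ (Ycell T).1 < c.1) :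
    Xend T = southEnd (RpSE T) (Ycell T) := by
  rw [Xend, if_pos hA, if_pos hS]

lemma X_A1_spec (hS : ∃ c ∈ RpSE T, c.2 = (Ycell T).2 ∧ (Ycell T).1 < c.1) :
    (Xend T).2 = (Ycell T).2 ∧ (∀ d ∈ RpSE T, d.2 = (Ycell T).2 → d.1 ≤ (Xend T).1) ∧
      (Ycell T).1 < (Xend T).1 := by
  have hsp := southEnd_spec (southEnd_exists (Ycell_mem_Rp hn (T := T)))
  rw [Xend_A1_eq hn hA hS]
  obtain ⟨c, hc, h1, h2⟩ := hS
  exact ⟨hsp.2.1, hsp.2.2, lt_of_lt_of_le h2 (hsp.2.2 c hc h1)⟩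

lemma not_YmX_A1 (hS : ∃ c ∈ RpSE T, c.2 = (Ycell T).2 ∧ (Ycell T).1 < c.1) :
    ¬ weakSW (Ycell T) (Xend T) := by
  have h := (X_A1_spec hn hA hS).2.2
  rintro ⟨h1, _⟩
  omega

lemma col_contig_A1 (hS : ∃ c ∈ RpSE T, c.2 = (Ycell T).2 ∧ (Ycell T).1 < c.1)
    {ρ : ℕ} (h1 : (Ycell T).1 ≤ ρ) (h2 : ρ ≤ (Xend T).1) :
    (ρ, (Ycell T).2) ∈ RpSE T := by
  have hX := X_A1_spec hn hA hS
  have hXs : Xend T ∈ skewCells lam mu := Rp_skew hn (Xend_mem_Rp hn hA)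
  have hYs : Ycell T ∈ skewCells lam mu := Rp_skew hn (Ycell_mem_Rp hn)
  have hXpair : Xend T = ((Xend T).1, (Ycell T).2) := Prod.ext rfl hX.1
  have hmem : ((ρ, (Ycell T).2) : Cell) ∈ skewCells lam mu := by
    apply skew_convex hYs (hXpair ▸ hXs) (by simpa using h1) (by simpa using h2) <;> simp
  apply mem_Rp_of_entry hn hmem
  rcases eq_or_lt_of_le h1 with he | hlt
  · have : ((ρ, (Ycell T).2) : Cell) = Ycell T := Prod.ext (by simp [← he]) rfl
    rw [this, entry_Ycell hn]
  · have h3 : T.entry (Ycell T) < T.entry (ρ, (Ycell T).2) := by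
      have := entry_lt_of_col T (i := (Ycell T).1) (i' := ρ) (j := (Ycell T).2)
        (by simpa using hYs) hmem hlt
      simpa using this
    rw [entry_Ycell hn] at h3
    omega

include hR

lemma propII_A1 (hk2 : 2 ≤ kSE T)
    (hS : ∃ c ∈ RpSE T, c.2 = (Ycell T).2 ∧ (Ycell T).1 < c.1) : PropII R (kSE T) := by
  have hX1 := X_A1_spec hn hA hS
  have hXb : Xend T ∈ SEboundary lam mu := Rp_boundary hn (Xend_mem_Rp hn hA)
  have hMR : pos R (numCells lam mu - kSE T + 1) = Ycell T :=
    posR_m_case1 hn hR hA (not_YmX_A1 hn hA hS)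
  -- the north neighbour of X is in the image of S
  have hnb : (((Xend T).1 - 1, (Ycell T).2) : Cell) ∈ RpSE T :=
    col_contig_A1 hn hA hS (by omega) (by omega)
  have hnbX : (((Xend T).1 - 1, (Ycell T).2) : Cell) ≠ Xend T := by
    intro h
    have := congrArg Prod.fst h
    simp at this
    omega
  have hx₀ := R_entry_mem_S hn hR hA hnb hnbX
  have hasN : hasNorthNbr R (kSE T) := by
    refine ⟨R.entry ((Xend T).1 - 1, (Ycell T).2), by simp only [Finset.mem_Icc]; omega, ?_⟩
    rw [posR_N hn hR hA, pos_entry R (Rp_skew hn hnb)]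
    constructor
    · simp [hX1.1]
    · simp; omega
  have hasWf : ¬ hasWestNbr R (kSE T) := by
    rintro ⟨x, hx, h1, h2⟩
    rw [posR_N hn hR hA] at h1 h2
    obtain ⟨hwRp, hwX, hwe⟩ := posR_S_mem hn hR hA hx
    have hswLT : swLT (pos R x) (Xend T) := by
      rw [swLT_iff]
      omega
    have hXY : weakSW (Xend T) (Ycell T) := by
      rw [weakSW_iff]
      omega
    have h3 := T1 hn hwRp (Xend_mem_Rp hn hA) hswLT hXY
    have hwpair : pos R x = (((Xend T).1, (Xend T).2 - 1) : Cell) := Prod.ext h1 (by omega)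
    have h4 : T.entry ((Xend T).1, (Xend T).2 - 1) < T.entry ((Xend T).1, (Xend T).2) := by
      apply entry_lt_of_row T (hwpair ▸ Rp_skew hn hwRp) _ (by omega)
      have := Rp_skew hn (Xend_mem_Rp hn hA)
      simpa using this
    rw [← hwpair] at h4
    have h5 : T.entry ((Xend T).1, (Xend T).2) = T.entry (Xend T) := by
      congr
    omega
  -- the only balance requirement is with respect to the northern balance point
  have hbal : Balanced R
      (Finset.Icc (numCells lam mu - kSE T + 1) (numCells lam mu - 1))
      (northBP lam mu (pos R (numCells lam mu))) := by
    rw [posR_N hn hR hA]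
    have hWsp := northBP_spec hXb
    have hWY : (northBP lam mu (Xend T)).1 ≤ (Ycell T).1 :=
      hWsp.2.2.2 (Ycell T) (Rp_boundary hn (Ycell_mem_Rp hn)) hX1.1.symm (le_of_lt hX1.2.2)
    have hW2 : (northBP lam mu (Xend T)).2 = (Ycell T).2 := by
      rw [hWsp.2.1, hX1.1]
    constructor
    · -- northeast side: entries increase to the northeast
      intro x hx y hy hwx hwy hlt
      obtain ⟨hxRp, hxX, hxe⟩ := posR_S_mem hn hR hA hx
      obtain ⟨hyRp, hyX, hye⟩ := posR_S_mem hn hR hA hy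
      have h4 : weakSW (pos R (numCells lam mu - kSE T + 1)) (pos R x) := by
        rw [hMR, weakSW_iff]
        obtain ⟨ha, hb⟩ := hwx
        omega
      have := CL2 hn hR hA hk2 hxRp hyRp hxX hyX hlt h4
      rwa [hxe, hye] at this
    · -- southwest side: entries increase to the southwest
      intro x hx y hy hwx hwy hlt
      obtain ⟨hxRp, hxX, hxe⟩ := posR_S_mem hn hR hA hx
      obtain ⟨hyRp, hyX, hye⟩ := posR_S_mem hn hR hA hy
      have hclaim : ∀ {c : Cell}, c ∈ RpSE T → weakSW c (northBP lam mu (Xend T)) →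
          weakSW c (Ycell T) := by
        intro c hc hw
        rcases Rp_comparable hn hc (Ycell_mem_Rp hn) with h | h
        · exact h
        · obtain ⟨h5, h6⟩ := h
          obtain ⟨h7, h8⟩ := hw
          have hcol : c.2 = (Ycell T).2 := by omega
          have := no_Rp_north_Ym hn hc hcol
          have hrow : c.1 = (Ycell T).1 := by omega
          rw [Prod.ext hrow hcol]
          exact weakSW_refl _
      have h4 : weakSW (pos R x) (pos R (numCells lam mu - kSE T + 1)) := by
        rw [hMR]
        exact hclaim hxRp hwx
      have := CL1 hn hR hA hk2 hyRp hxRp hyX hxX hlt h4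
      rwa [hxe, hye] at this
  exact ⟨fun h => hasWf h.2, fun _ => hbal, fun hW => absurd hW hasWf,
    fun hN _ => absurd hasN hN⟩

end CaseA

end SkewSE
namespace SkewSE

open Finset

set_option linter.unusedSectionVars false

variable {lam mu : YoungDiagram}

/-! ### Part 9: Property (ii) in case A2 -/

section CaseA

variable {T R : SYT lam mu} (hn : 1 ≤ numCells lam mu)
  (hR : R.entry = rotEntry T) (hA : SWmostAtN T)

include hn hA

lemma Xend_A2_eq (hS : ¬ ∃ c ∈ RpSE T, c.2 = (Ycell T).2 ∧ (Ycell T).1 < c.1) :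
    Xend T = eastEnd (RpSE T) (Ycell T) := by
  rw [Xend, if_pos hA, if_neg hS]

lemma X_A2_spec (hS : ¬ ∃ c ∈ RpSE T, c.2 = (Ycell T).2 ∧ (Ycell T).1 < c.1) :
    (Xend T).1 = (Ycell T).1 ∧ (∀ d ∈ RpSE T, d.1 = (Ycell T).1 → d.2 ≤ (Xend T).2) ∧
      (Ycell T).2 ≤ (Xend T).2 := by
  have hsp := eastEnd_spec (eastEnd_exists (Ycell_mem_Rp hn (T := T)))
  rw [Xend_A2_eq hn hA hS]
  exact ⟨hsp.2.1, hsp.2.2, hsp.2.2 (Ycell T) (Ycell_mem_Rp hn) rfl⟩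

omit hA in
lemma hSa_of_not {hS : ¬ ∃ c ∈ RpSE T, c.2 = (Ycell T).2 ∧ (Ycell T).1 < c.1} :
    ∀ c ∈ RpSE T, c.2 = (Ycell T).2 → c.1 ≤ (Ycell T).1 := by
  push_neg at hS
  exact fun c hc h2 => hS c hc h2

lemma YmX_A2 (hS : ¬ ∃ c ∈ RpSE T, c.2 = (Ycell T).2 ∧ (Ycell T).1 < c.1) :
    weakSW (Ycell T) (Xend T) := by
  have h := X_A2_spec hn hA hS
  exact ⟨le_of_eq h.1, h.2.2⟩

omit hA in
lemma A2C (hS : ¬ ∃ c ∈ RpSE T, c.2 = (Ycell T).2 ∧ (Ycell T).1 < c.1) :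
    (((Ycell T).1 + 1, (Ycell T).2) : Cell) ∉ skewCells lam mu := by
  intro h
  have hYs : Ycell T ∈ skewCells lam mu := Rp_skew hn (Ycell_mem_Rp hn)
  have h1 : T.entry (Ycell T) < T.entry ((Ycell T).1 + 1, (Ycell T).2) := by
    have := T.col_lt (Ycell T).1 (Ycell T).2 (by simpa using hYs) h
    simpa using this
  rw [entry_Ycell hn] at h1
  have h2 : (((Ycell T).1 + 1, (Ycell T).2) : Cell) ∈ RpSE T :=
    mem_Rp_of_entry hn h (by omega)
  have := hSa_of_not hn (hS := hS) _ h2 rfl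
  simp at this

lemma row_contig_A2 (hS : ¬ ∃ c ∈ RpSE T, c.2 = (Ycell T).2 ∧ (Ycell T).1 < c.1)
    {κ : ℕ} (h1 : (Ycell T).2 ≤ κ) (h2 : κ ≤ (Xend T).2) :
    (((Ycell T).1, κ) : Cell) ∈ RpSE T := by
  have hX := X_A2_spec hn hA hS
  have hXs : Xend T ∈ skewCells lam mu := Rp_skew hn (Xend_mem_Rp hn hA)
  have hYs : Ycell T ∈ skewCells lam mu := Rp_skew hn (Ycell_mem_Rp hn)
  have hXpair : Xend T = ((Ycell T).1, (Xend T).2) := Prod.ext hX.1 rfl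
  have hmem : (((Ycell T).1, κ) : Cell) ∈ skewCells lam mu := by
    apply skew_convex hYs (hXpair ▸ hXs) (by simp) (by simp) (by simpa using h1)
      (by simpa using h2)
  apply mem_Rp_of_entry hn hmem
  rcases eq_or_lt_of_le h1 with he | hlt
  · have : (((Ycell T).1, κ) : Cell) = Ycell T := Prod.ext rfl (by simp [← he])
    rw [this, entry_Ycell hn]
  · have h3 : T.entry (Ycell T) < T.entry ((Ycell T).1, κ) := by
      have := entry_lt_of_row T (i := (Ycell T).1) (j := (Ycell T).2) (j' := κ)
        (by simpa using hYs) hmem hlt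
      simpa using this
    rw [entry_Ycell hn] at h3
    omega

include hR

/-- Position facts for `P = pos R m` in case A2. -/
lemma P_pos_A2 (hk2 : 2 ≤ kSE T)
    (hS : ¬ ∃ c ∈ RpSE T, c.2 = (Ycell T).2 ∧ (Ycell T).1 < c.1) :
    pos R (numCells lam mu - kSE T + 1) ∈ RpSE T ∧
    (Ycell T).1 < (pos R (numCells lam mu - kSE T + 1)).1 ∧
    (pos R (numCells lam mu - kSE T + 1)).2 < (Ycell T).2 ∧
    weakSW (pos R (numCells lam mu - kSE T + 1)) (Ycell T) := by
  have hYmX := YmX_A2 hn hA hS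
  have hYmch := Ym_mem_chain hn hA hYmX
  have hpred := pred_spec hn hR hA hYmch (Ym_ne_posN hn hk2)
  have hMR := posR_m_case2 hn hR hA hk2 hYmX
  rw [hMR]
  set P := nextSW (chainSE T) (Ycell T) with hP
  have hPRp : P ∈ RpSE T := chain_sub_Rp hn hA hpred.1
  have hsw : swLT P (Ycell T) := hpred.2.1
  have h1 : (Ycell T).1 ≤ P.1 := hsw.1.1
  have h2 : P.2 ≤ (Ycell T).2 := hsw.1.2
  have hcol : P.2 < (Ycell T).2 := by
    rcases lt_or_eq_of_le h2 with h | h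
    · exact h
    · exfalso
      have h3 := hSa_of_not hn (hS := hS) P hPRp h
      exact hsw.2 (Prod.ext (by omega) h)
  have hrow : (Ycell T).1 < P.1 := by
    rcases lt_or_eq_of_le h1 with h | h
    · exact h
    · exfalso
      have := no_Rp_west_Ym hn hPRp h.symm
      omega
  exact ⟨hPRp, hrow, hcol, hsw.1⟩

/-- The geometric separation lemma: in case A2 (with `k ≥ 2`), the cell directly
west of `Ycell` is on the southeast boundary. -/
lemma geo_A2 (hk2 : 2 ≤ kSE T)
    (hS : ¬ ∃ c ∈ RpSE T, c.2 = (Ycell T).2 ∧ (Ycell T).1 < c.1) :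
    (((Ycell T).1, (Ycell T).2 - 1) : Cell) ∈ SEboundary lam mu ∧ 1 ≤ (Ycell T).2 := by
  obtain ⟨hPRp, hProw, hPcol, hPY⟩ := P_pos_A2 hn hR hA hk2 hS
  set P := pos R (numCells lam mu - kSE T + 1) with hPdef
  have hY2 : 1 ≤ (Ycell T).2 := by omega
  have hYs : Ycell T ∈ skewCells lam mu := Rp_skew hn (Ycell_mem_Rp hn)
  have hA2C := A2C hn (hS := hS)
  have hmem : (((Ycell T).1, (Ycell T).2 - 1) : Cell) ∈ skewCells lam mu := by
    rw [mem_skew_iff]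
    constructor
    · have hYlam : ((Ycell T).1, (Ycell T).2) ∈ lam := by
        rw [Prod.mk.eta]; exact skew_mem_lam hYs
      exact lam.up_left_mem (le_refl _) (by omega) hYlam
    · intro hmu
      -- separation argument
      have hQ : ∀ x y : Cell, x ∈ skewCells lam mu → y ∈ skewCells lam mu → adjacent x y →
          (x.1 ≤ (Ycell T).1 ∧ (Ycell T).2 ≤ x.2) →
          (y.1 ≤ (Ycell T).1 ∧ (Ycell T).2 ≤ y.2) := by
        intro x y hx hy hadj hQx
        have hy1 : ¬(y.1 ≤ (Ycell T).1 ∧ y.2 < (Ycell T).2) := by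
          rintro ⟨ha, hb⟩
          have hmu' : (y.1, y.2) ∈ mu := mu.up_left_mem ha (by omega) hmu
          rw [Prod.mk.eta] at hmu'
          exact skew_not_mem_mu hy hmu' 
        have hy2 : ¬((Ycell T).1 < y.1 ∧ (Ycell T).2 ≤ y.2) := by
          rintro ⟨ha, hb⟩
          apply hA2C
          rw [mem_skew_iff]
          constructor
          · have hylam : (y.1, y.2) ∈ lam := by rw [Prod.mk.eta]; exact skew_mem_lam hy
            exact lam.up_left_mem (by omega) hb hylam
          · intro hmu2
            have hmu3 : ((Ycell T).1, (Ycell T).2) ∈ mu :=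
              mu.up_left_mem (by omega) (le_refl _) hmu2
            rw [Prod.mk.eta] at hmu3
            exact skew_not_mem_mu hYs hmu3
        by_contra hQy
        unfold adjacent at hadj
        omega
      have hcomp := Rp_sameComp hn (Ycell_mem_Rp hn (T := T)) hPRp
      have := sameComp_invariant (fun x y hx hy hadj h => hQ x y hx hy hadj h) hcomp
        ⟨le_refl _, le_refl _⟩
      omega
  refine ⟨mem_SEb_iff.mpr ⟨hmem, ?_⟩, hY2⟩
  have : ((Ycell T).1 + 1, (Ycell T).2 - 1 + 1) = (((Ycell T).1 + 1, (Ycell T).2) : Cell) := by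
    simp; omega
  rw [this]
  exact hA2C

lemma propII_A2 (hk2 : 2 ≤ kSE T)
    (hS : ¬ ∃ c ∈ RpSE T, c.2 = (Ycell T).2 ∧ (Ycell T).1 < c.1) : PropII R (kSE T) := by
  have hX := X_A2_spec hn hA hS
  have hYmX := YmX_A2 hn hA hS
  have hXb : Xend T ∈ SEboundary lam mu := Rp_boundary hn (Xend_mem_Rp hn hA)
  have hYmch := Ym_mem_chain hn hA hYmX
  have hpred := pred_spec hn hR hA hYmch (Ym_ne_posN hn hk2)
  have hMR := posR_m_case2 hn hR hA hk2 hYmX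
  obtain ⟨hPRp, hProw, hPcol, hPY⟩ := P_pos_A2 hn hR hA hk2 hS
  have hPeq : pos R (numCells lam mu - kSE T + 1) = nextSW (chainSE T) (Ycell T) := hMR
  -- common facts
  have hYmNE : ∀ {c : Cell}, c ∈ RpSE T → c ≠ Xend T → c.1 ≤ (Ycell T).1 →
      (Ycell T).2 ≤ c.2 → weakSW (Ycell T) c := by
    -- a cell of Rp weakly northeast-positioned relative to Ym is weakly NE of Ym
    intro c hc hcX h1 h2
    exact ⟨h1, h2⟩
  have hSWymP : ∀ {c : Cell}, c ∈ RpSE T → c ≠ Xend T → swLT c (Ycell T) →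
      weakSW c (pos R (numCells lam mu - kSE T + 1)) := by
    intro c hc hcX hlt
    rw [hPeq]
    exact P_max hn hA hk2 hYmX c hc hlt
  have hYmP : weakSW (pos R (numCells lam mu - kSE T + 1)) (Ycell T) := hPY
  -- case split: A2a (X strictly east of Ym) or A2b (X = Ym)
  rcases lt_or_eq_of_le hX.2.2 with hgt | hXeqY
  · -- Case A2a
    have hX2pos : 1 ≤ (Xend T).2 := by omega
    have hnb : (((Ycell T).1, (Xend T).2 - 1) : Cell) ∈ RpSE T :=
      row_contig_A2 hn hA hS (by omega) (by omega)
    have hnbX : (((Ycell T).1, (Xend T).2 - 1) : Cell) ≠ Xend T := by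
      intro h
      have := congrArg Prod.snd h
      simp at this
      omega
    have hx₀ := R_entry_mem_S hn hR hA hnb hnbX
    have hasW : hasWestNbr R (kSE T) := by
      refine ⟨R.entry ((Ycell T).1, (Xend T).2 - 1), by simp only [Finset.mem_Icc]; omega, ?_⟩
      rw [posR_N hn hR hA, pos_entry R (Rp_skew hn hnb)]
      constructor
      · simp [hX.1]
      · simp; omega
    have hasNf : ¬ hasNorthNbr R (kSE T) := by
      rintro ⟨x, hx, h1, h2⟩
      rw [posR_N hn hR hA] at h1 h2
      obtain ⟨hdRp, hdX, hde⟩ := posR_S_mem hn hR hA hx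
      have hswLT : swLT (Xend T) (pos R x) := by
        rw [swLT_iff]
        omega
      have h3 := T2 hn (Xend_mem_Rp hn hA) hdRp hswLT hYmX
      have hdpair : pos R x = (((Xend T).1 - 1, (Xend T).2) : Cell) := Prod.ext (by omega) h1
      have h4 : T.entry ((Xend T).1 - 1, (Xend T).2) < T.entry ((Xend T).1, (Xend T).2) := by
        apply entry_lt_of_col T (hdpair ▸ Rp_skew hn hdRp) _ (by omega)
        have := Rp_skew hn (Xend_mem_Rp hn hA)
        simpa using this
      rw [← hdpair] at h4
      have h5 : T.entry ((Xend T).1, (Xend T).2) = T.entry (Xend T) := by congr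
      omega
    have hbal : Balanced R
        (Finset.Icc (numCells lam mu - kSE T + 1) (numCells lam mu - 1))
        (westBP lam mu (pos R (numCells lam mu))) := by
      rw [posR_N hn hR hA]
      have hWsp := westBP_spec hXb
      obtain ⟨hgeo, hY2⟩ := geo_A2 hn hR hA hk2 hS
      have hWlt : (westBP lam mu (Xend T)).2 < (Ycell T).2 := by
        have := hWsp.2.2.2 ((Ycell T).1, (Ycell T).2 - 1) hgeo (by simp [hX.1]) (by simp; omega)
        simp at this
        omega
      have hW1 : (westBP lam mu (Xend T)).1 = (Ycell T).1 := by rw [hWsp.2.1, hX.1]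
      constructor
      · -- northeast side
        intro x hx y hy hwx hwy hlt
        obtain ⟨hxRp, hxX, hxe⟩ := posR_S_mem hn hR hA hx
        obtain ⟨hyRp, hyX, hye⟩ := posR_S_mem hn hR hA hy
        have hYmc : weakSW (Ycell T) (pos R x) := by
          rcases Rp_comparable hn hxRp (Ycell_mem_Rp hn) with h | h
          · by_cases he : pos R x = Ycell T
            · rw [he]; exact weakSW_refl _
            · exfalso
              obtain ⟨ha, hb⟩ := h
              obtain ⟨hc, hd⟩ := hwx
              have hrow : (pos R x).1 = (Ycell T).1 := by omega
              have := no_Rp_west_Ym hn hxRp hrow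
              exact he (Prod.ext hrow (by omega))
          · exact h
        have h4 : weakSW (pos R (numCells lam mu - kSE T + 1)) (pos R x) :=
          weakSW_trans hYmP hYmc
        have := CL2 hn hR hA hk2 hxRp hyRp hxX hyX hlt h4
        rwa [hxe, hye] at this
      · -- southwest side
        intro x hx y hy hwx hwy hlt
        obtain ⟨hxRp, hxX, hxe⟩ := posR_S_mem hn hR hA hx
        obtain ⟨hyRp, hyX, hye⟩ := posR_S_mem hn hR hA hy
        have h4 : weakSW (pos R x) (pos R (numCells lam mu - kSE T + 1)) := by
          apply hSWymP hxRp hxX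
          rw [swLT_iff]
          obtain ⟨ha, hb⟩ := hwx
          constructor
          · omega
          · omega
        have := CL1 hn hR hA hk2 hyRp hxRp hyX hxX hlt h4
        rwa [hxe, hye] at this
    exact ⟨fun h => hasNf h.1, fun hN => absurd hN hasNf, fun _ => hbal,
      fun _ hW => absurd hasW hW⟩
  · -- Case A2b : X = Ym
    have hXY : Xend T = Ycell T := Prod.ext hX.1 hXeqY.symm
    have hasNf : ¬ hasNorthNbr R (kSE T) := by
      rintro ⟨x, hx, h1, h2⟩
      rw [posR_N hn hR hA, hXY] at h1 h2
      obtain ⟨hdRp, hdX, hde⟩ := posR_S_mem hn hR hA hx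
      have := no_Rp_north_Ym hn hdRp h1
      omega
    have hasWf : ¬ hasWestNbr R (kSE T) := by
      rintro ⟨x, hx, h1, h2⟩
      rw [posR_N hn hR hA, hXY] at h1 h2
      obtain ⟨hdRp, hdX, hde⟩ := posR_S_mem hn hR hA hx
      have := no_Rp_west_Ym hn hdRp h1
      omega
    have hbalN : Balanced R
        (Finset.Icc (numCells lam mu - kSE T + 1) (numCells lam mu - 1))
        (northBP lam mu (pos R (numCells lam mu))) := by
      rw [posR_N hn hR hA]
      have hWsp := northBP_spec hXb
      have hW2 : (northBP lam mu (Xend T)).2 = (Ycell T).2 := by rw [hWsp.2.1, hXY]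
      have hW1 : (northBP lam mu (Xend T)).1 ≤ (Ycell T).1 := by
        have h5 := hWsp.2.2.1
        have h6 := hX.1
        omega
      constructor
      · intro x hx y hy hwx hwy hlt
        obtain ⟨hxRp, hxX, hxe⟩ := posR_S_mem hn hR hA hx
        obtain ⟨hyRp, hyX, hye⟩ := posR_S_mem hn hR hA hy
        have h4 : weakSW (pos R (numCells lam mu - kSE T + 1)) (pos R x) := by
          apply weakSW_trans hYmP
          obtain ⟨ha, hb⟩ := hwx
          exact ⟨by omega, by omega⟩
        have := CL2 hn hR hA hk2 hxRp hyRp hxX hyX hlt h4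
        rwa [hxe, hye] at this
      · intro x hx y hy hwx hwy hlt
        obtain ⟨hxRp, hxX, hxe⟩ := posR_S_mem hn hR hA hx
        obtain ⟨hyRp, hyX, hye⟩ := posR_S_mem hn hR hA hy
        have h4 : weakSW (pos R x) (pos R (numCells lam mu - kSE T + 1)) := by
          apply hSWymP hxRp hxX
          obtain ⟨ha, hb⟩ := hwx
          have hrow : (Ycell T).1 ≤ (pos R x).1 := by
            by_contra hcon
            push_neg at hcon
            rcases Rp_comparable hn hxRp (Ycell_mem_Rp hn) with h | h
            · obtain ⟨h5, h6⟩ := h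
              omega
            · obtain ⟨h5, h6⟩ := h
              have hcol : (pos R x).2 = (Ycell T).2 := by omega
              have := no_Rp_north_Ym hn hxRp hcol
              omega
          refine ⟨⟨hrow, by omega⟩, fun he => ?_⟩
          rw [← hXY] at he
          exact hxX he
        have := CL1 hn hR hA hk2 hyRp hxRp hyX hxX hlt h4
        rwa [hxe, hye] at this
    have hbalW : Balanced R
        (Finset.Icc (numCells lam mu - kSE T + 1) (numCells lam mu - 1))
        (westBP lam mu (pos R (numCells lam mu))) := by
      rw [posR_N hn hR hA]
      have hWsp := westBP_spec hXb
      have hW1 : (westBP lam mu (Xend T)).1 = (Ycell T).1 := by rw [hWsp.2.1, hXY]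
      have hW2 : (westBP lam mu (Xend T)).2 ≤ (Ycell T).2 := by
        have h5 := hWsp.2.2.1
        omega
      constructor
      · intro x hx y hy hwx hwy hlt
        obtain ⟨hxRp, hxX, hxe⟩ := posR_S_mem hn hR hA hx
        obtain ⟨hyRp, hyX, hye⟩ := posR_S_mem hn hR hA hy
        have hYmc : weakSW (Ycell T) (pos R x) := by
          rcases Rp_comparable hn hxRp (Ycell_mem_Rp hn) with h | h
          · exfalso
            obtain ⟨ha, hb⟩ := h
            obtain ⟨hc, hd⟩ := hwx
            have hrow : (pos R x).1 = (Ycell T).1 := by omega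
            have := no_Rp_west_Ym hn hxRp hrow
            have hcol : (pos R x).2 = (Ycell T).2 := by omega
            exact hxX (by rw [hXY]; exact Prod.ext hrow hcol)
          · exact h
        have h4 : weakSW (pos R (numCells lam mu - kSE T + 1)) (pos R x) :=
          weakSW_trans hYmP hYmc
        have := CL2 hn hR hA hk2 hxRp hyRp hxX hyX hlt h4
        rwa [hxe, hye] at this
      · intro x hx y hy hwx hwy hlt
        obtain ⟨hxRp, hxX, hxe⟩ := posR_S_mem hn hR hA hx
        obtain ⟨hyRp, hyX, hye⟩ := posR_S_mem hn hR hA hy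
        have h4 : weakSW (pos R x) (pos R (numCells lam mu - kSE T + 1)) := by
          apply hSWymP hxRp hxX
          obtain ⟨ha, hb⟩ := hwx
          refine ⟨⟨by omega, by omega⟩, fun he => ?_⟩
          rw [← hXY] at he
          exact hxX he
        have := CL1 hn hR hA hk2 hyRp hxRp hyX hxX hlt h4
        rwa [hxe, hye] at this
    exact ⟨fun h => hasNf h.1, fun hN => absurd hN hasNf, fun hW => absurd hW hasWf,
      fun _ _ => ⟨hbalN, hbalW⟩⟩

end CaseA

end SkewSE
namespace SkewSE

open Finset

set_option linter.unusedSectionVars false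
set_option maxHeartbeats 1000000

variable {lam mu : YoungDiagram}

/-! ### Part 10: maximality (backward direction) in Case A -/

section CaseA

variable {T R : SYT lam mu} (hn : 1 ≤ numCells lam mu)
  (hR : R.entry = rotEntry T) (hA : SWmostAtN T)

include hn hR hA

lemma MR_le_Ym (hk2 : 2 ≤ kSE T) :
    weakSW (pos R (numCells lam mu - kSE T + 1)) (Ycell T) ∧
    pos R (numCells lam mu - kSE T + 1) ∈ RpSE T ∧
    pos R (numCells lam mu - kSE T + 1) ≠ Xend T := by
  have hk := kSE_mem T hn
  have hmRc := m_mem_Rc hn (T := T)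
  have hne : numCells lam mu - kSE T + 1 ≠ numCells lam mu := by omega
  refine ⟨?_, posR_mem_Rp hn hR hA hmRc, posR_ne_X hn hR hA hmRc hne⟩
  by_cases hYX : weakSW (Ycell T) (Xend T)
  · rw [posR_m_case2 hn hR hA hk2 hYX]
    exact (pred_spec hn hR hA (Ym_mem_chain hn hA hYX) (Ym_ne_posN hn hk2)).2.1.1
  · rw [posR_m_case1 hn hR hA hYX]
    exact weakSW_refl _

lemma backward_A {k' : ℕ} (hk'n : k' ≤ numCells lam mu) (hgt : kSE T < k')
    (hI : PropI R k') (hII : PropII R k') : False := by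
  have hk := kSE_mem T hn
  have hk2' : 2 ≤ k' := by omega
  -- abbreviations
  set n := numCells lam mu with hndef
  set k := kSE T with hkdef
  set m1 := n - k with hm1def
  set v₀ := n - k' + 1 with hv₀def
  have hne' : (Finset.Icc (n - k' + 1) (n - 1)).Nonempty := by
    rw [Finset.nonempty_Icc]
    omega
  obtain ⟨hMU', hcomp'⟩ := hI hne'
  obtain ⟨hne'', hsub', hbd', hsc', htot', hcl'⟩ := hMU'
  have hminS' : (Finset.Icc (n - k' + 1) (n - 1)).min' hne'' = v₀ := by
    have hv : v₀ ∈ Finset.Icc (n - k' + 1) (n - 1) := by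
      simp only [Finset.mem_Icc]
      omega
    apply le_antisymm
    · exact Finset.min'_le _ _ hv
    · apply Finset.le_min'
      intro y hy
      exact (Finset.mem_Icc.mp hy).1
  -- the key clause of min-unimodality of S' in R
  have clause' : ∀ x ∈ Finset.Icc (n - k' + 1) (n - 1), ∀ y ∈ Finset.Icc (n - k' + 1) (n - 1),
      swLT (pos R x) (pos R y) →
      (weakSW (pos R y) (pos R v₀) → y < x) ∧ (weakSW (pos R v₀) (pos R x) → x < y) := by
    intro x hx y hy hlt
    have := hcl' x hx y hy hlt
    rwa [hminS'] at this
  have hm1S' : m1 ∈ Finset.Icc (n - k' + 1) (n - 1) := by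
    simp only [Finset.mem_Icc]; omega
  have hv₀S' : v₀ ∈ Finset.Icc (n - k' + 1) (n - 1) := by
    simp only [Finset.mem_Icc]; omega
  have hmS'f : 2 ≤ k → n - k + 1 ∈ Finset.Icc (n - k' + 1) (n - 1) := by
    intro h
    simp only [Finset.mem_Icc]; omega
  have hm1Icc : m1 ∈ Finset.Icc 1 n := by simp only [Finset.mem_Icc]; omega
  have hm1Rc : m1 ∉ RcSE T := by
    rw [mem_Rc_iff]
    omega
  -- dm' = common position of m1 in R and T ; dm = position of the minimum of S' in R
  have hdm'T : pos R m1 = pos T m1 := posR_eq_posT_of_not_Rc hn hR hm1Icc hm1Rc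
  have hdm'Rp : pos R m1 ∉ RpSE T := posR_not_mem_Rp hn hR hm1Icc hm1Rc
  have hdm'b : pos R m1 ∈ SEboundary lam mu := hbd' m1 hm1S'
  have hdmb : pos R v₀ ∈ SEboundary lam mu := hbd' v₀ hv₀S'
  have hS'entry : ∀ x ∈ Finset.Icc (n - k' + 1) (n - 1), R.entry (pos R x) = x := by
    intro x hx
    apply entry_pos R
    simp only [Finset.mem_Icc] at hx ⊢
    omega
  -- entries of Rp \ {X} give elements of S'
  have hF3 : ∀ {c : Cell}, c ∈ RpSE T → c ≠ Xend T →
      R.entry c ∈ Finset.Icc (n - k' + 1) (n - 1) ∧ pos R (R.entry c) = c ∧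
        n - k + 1 ≤ R.entry c := by
    intro c hc hcX
    have h1 := R_entry_mem_S hn hR hA hc hcX
    exact ⟨by simp only [Finset.mem_Icc]; omega, pos_entry R (Rp_skew hn hc), h1.1⟩
  -- case k = 1 : every Rp-cell is Ycell
  have hk1Rp : k = 1 → ∀ c ∈ RpSE T, c = Ycell T := by
    intro h1 c hc
    obtain ⟨x, hx, rfl⟩ := mem_Rp_iff.mp hc
    rw [mem_Rc_iff] at hx
    have hxn : x = n - k + 1 := by omega
    rw [hxn]
    rfl
  -- ================= (Ga) =================
  have hGa : ∀ c ∈ RpSE T, weakSW c (pos R m1) → weakSW c (Ycell T) := by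
    intro c hc hcdm'
    by_cases hk1 : k = 1
    · rw [hk1Rp hk1 c hc]
      exact weakSW_refl _
    have hk2 : 2 ≤ k := by omega
    rcases Rp_comparable hn hc (Ycell_mem_Rp hn) with h | h
    · exact h
    by_cases hYmc : c = Ycell T
    · rw [hYmc]; exact weakSW_refl _
    exfalso
    have hYc : swLT (Ycell T) c := ⟨h, fun he => hYmc he.symm⟩
    have hcdm'' : swLT c (pos R m1) := ⟨hcdm', fun he => hdm'Rp (he ▸ hc)⟩
    obtain ⟨hMRle, hMRRp, hMRX⟩ := MR_le_Ym hn hR hA hk2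
    by_cases hcX : c = Xend T
    · -- c = X : Ym strictly southwest of X
      have hYX : weakSW (Ycell T) (Xend T) := hcX ▸ hYc.1
      have hYne : Ycell T ≠ Xend T := fun he => hYc.2 (he.trans hcX.symm)
      obtain ⟨hvYS', hvYpos, hvYge⟩ := hF3 (Ycell_mem_Rp hn (T := T)) hYne
      have hswYdm' : swLT (Ycell T) (pos R m1) := swLT_trans_weakSW hYc (hcX ▸ hcdm')
      -- pair (entry Ym , m1)
      have hp1 := (clause' _ hvYS' m1 hm1S' (by rwa [hvYpos])).2
      have hYmdm : swLT (Ycell T) (pos R v₀) := by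
        by_cases he : Ycell T = pos R v₀
        · exfalso
          have h2 : weakSW (pos R v₀) (pos R (R.entry (Ycell T))) := by
            rw [hvYpos, ← he]
            exact weakSW_refl _
          have := hp1 h2
          omega
        · rcases SEb_comparable (Rp_boundary hn (Ycell_mem_Rp hn (T := T))) hdmb with h2 | h2
          · exact ⟨h2, he⟩
          · exfalso
            have h3 : weakSW (pos R v₀) (pos R (R.entry (Ycell T))) := by rwa [hvYpos]
            have := hp1 h3
            omega
      -- pair (m , entry Ym)
      have hpred := pred_spec hn hR hA (Ym_mem_chain hn hA hYX) (Ym_ne_posN hn hk2)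
      have hMR2 : pos R (n - k + 1) = nextSW (chainSE T) (Ycell T) :=
        posR_m_case2 hn hR hA hk2 hYX
      have hswPY : swLT (pos R (n - k + 1)) (Ycell T) := by
        rw [hMR2]
        exact hpred.2.1
      have hp2 := (clause' _ (hmS'f hk2) _ hvYS' (by rw [hvYpos]; exact hswPY)).1
      have := hp2 (by rw [hvYpos]; exact hYmdm.1)
      omega
    · -- c ≠ X
      obtain ⟨hwS', hwpos, hwge⟩ := hF3 hc hcX
      have hswcdm' : swLT c (pos R m1) := hcdm''
      have hp1 := (clause' _ hwS' m1 hm1S' (by rwa [hwpos])).2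
      have hcdm : weakSW c (pos R v₀) := by
        rcases SEb_comparable (Rp_boundary hn hc) hdmb with h2 | h2
        · exact h2
        · by_cases he : c = pos R v₀
          · rw [he]; exact weakSW_refl _
          · exfalso
            have h3 : weakSW (pos R v₀) (pos R (R.entry c)) := by rwa [hwpos]
            have := hp1 h3
            omega
      have hswMRc : swLT (pos R (n - k + 1)) c := weakSW_trans_swLT hMRle hYc
      have hp2 := (clause' _ (hmS'f hk2) _ hwS' (by rwa [hwpos])).1
      have := hp2 (by rwa [hwpos])
      omega
  -- ================= (Gb) =================
  have hGb : ∀ c ∈ RpSE T, weakSW (pos R m1) c → weakSW (Ycell T) c := by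
    intro c hc hdm'c
    by_cases hk1 : k = 1
    · rw [hk1Rp hk1 c hc]
      exact weakSW_refl _
    have hk2 : 2 ≤ k := by omega
    rcases Rp_comparable hn (Ycell_mem_Rp hn) hc with h | h
    · exact h
    by_cases hYmc : c = Ycell T
    · rw [hYmc]; exact weakSW_refl _
    exfalso
    have hcY : swLT c (Ycell T) := ⟨h, hYmc⟩
    have hdm'c' : swLT (pos R m1) c := ⟨hdm'c, fun he => hdm'Rp (he ▸ hc)⟩
    by_cases hcX : c = Xend T
    · -- c = X strictly southwest of Ym
      have hXY : swLT (Xend T) (Ycell T) := hcX ▸ hcY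
      by_cases hS : ∃ d ∈ RpSE T, d.2 = (Ycell T).2 ∧ (Ycell T).1 < d.1
      · have hX1 := X_A1_spec hn hA hS
        have hMR1 : pos R (n - k + 1) = Ycell T := posR_m_case1 hn hR hA (not_YmX_A1 hn hA hS)
        have hswdm'Ym : swLT (pos R m1) (Ycell T) := swLT_trans_weakSW hdm'c' hcY.1
        have hp1 := (clause' m1 hm1S' _ (hmS'f hk2) (by rw [hMR1]; exact hswdm'Ym)).1
        have hdmYm : swLT (pos R v₀) (Ycell T) := by
          by_cases he : pos R v₀ = Ycell T
          · exfalso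
            have := hp1 (by rw [hMR1, ← he]; exact weakSW_refl _)
            omega
          · rcases SEb_comparable hdmb (Rp_boundary hn (Ycell_mem_Rp hn (T := T))) with h2 | h2
            · exact ⟨h2, he⟩
            · exfalso
              have := hp1 (by rw [hMR1]; exact h2)
              omega
        rcases eq_or_lt_of_le (show (Ycell T).1 + 1 ≤ (Xend T).1 by
            have := hX1.2.2; omega) with hXr | hXr
        · -- the north neighbour of X is Ycell itself: use the balance condition
          have hNn : hasNorthNbr R k' := by
            refine ⟨n - k + 1, hmS'f hk2, ?_⟩
            rw [posR_N hn hR hA, hMR1]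
            exact ⟨hX1.1.symm, by omega⟩
          have hbal := hII.2.1 hNn
          rw [posR_N hn hR hA] at hbal
          have hWsp := northBP_spec (Rp_boundary hn (Xend_mem_Rp hn hA))
          have hWY : (northBP lam mu (Xend T)).1 ≤ (Ycell T).1 :=
            hWsp.2.2.2 (Ycell T) (Rp_boundary hn (Ycell_mem_Rp hn)) hX1.1.symm (by omega)
          have he1 := hWsp.2.1
          have he2 := hX1.1
          have hYmW : weakSW (Ycell T) (northBP lam mu (Xend T)) := ⟨hWY, by omega⟩
          have hdmW : weakSW (pos R v₀) (northBP lam mu (Xend T)) := by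
            have h5 := hdmYm.1.1
            have h6 := hdmYm.1.2
            exact ⟨by omega, by omega⟩
          have := hbal.2 (n - k + 1) (hmS'f hk2) v₀ hv₀S'
            (by rw [hMR1]; exact hYmW) hdmW (by rw [hMR1]; exact hdmYm)
          omega
        · -- there is a cell of Rp strictly between X and Ycell in the column
          have hnb : (((Xend T).1 - 1, (Ycell T).2) : Cell) ∈ RpSE T :=
            col_contig_A1 hn hA hS (by omega) (by omega)
          have hnbX : (((Xend T).1 - 1, (Ycell T).2) : Cell) ≠ Xend T := by
            intro h4
            have := congrArg Prod.fst h4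
            simp at this
            omega
          obtain ⟨haS', hapos, hage⟩ := hF3 hnb hnbX
          have he2 := hX1.1
          have hXnb : weakSW (Xend T) (((Xend T).1 - 1, (Ycell T).2) : Cell) := by
            refine ⟨?_, ?_⟩ <;> simp <;> omega
          have hp2 := (clause' m1 hm1S' _ haS'
            (by rw [hapos]; exact swLT_trans_weakSW (hcX ▸ hdm'c') hXnb)).1
          have hdmnb : swLT (pos R v₀) (((Xend T).1 - 1, (Ycell T).2) : Cell) := by
            by_cases he : pos R v₀ = (((Xend T).1 - 1, (Ycell T).2) : Cell)
            · exfalso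
              have := hp2 (by rw [hapos, ← he]; exact weakSW_refl _)
              omega
            · rcases SEb_comparable hdmb (Rp_boundary hn hnb) with h2 | h2
              · exact ⟨h2, he⟩
              · exfalso
                have := hp2 (by rw [hapos]; exact h2)
                omega
          have hswnbY : swLT (((Xend T).1 - 1, (Ycell T).2) : Cell) (Ycell T) := by
            rw [swLT_iff]
            refine ⟨by simp; omega, by simp, by simp; omega⟩
          have hp3 := (clause' _ haS' _ (hmS'f hk2) (by rw [hapos, hMR1]; exact hswnbY)).2
          have := hp3 (by rw [hapos]; exact hdmnb.1)
          omega
      · -- X = eastEnd then Ym weakly southwest of X, contradiction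
        have h4 := YmX_A2 hn hA hS
        exact hXY.2 (weakSW_antisymm hXY.1 h4)
    · -- c ≠ X
      obtain ⟨hwS', hwpos, hwge⟩ := hF3 hc hcX
      have hp1 := (clause' m1 hm1S' _ hwS' (by rw [hwpos]; exact hdm'c')).1
      have hdmc : swLT (pos R v₀) c := by
        by_cases he : pos R v₀ = c
        · exfalso
          have := hp1 (by rw [hwpos, ← he]; exact weakSW_refl _)
          omega
        · rcases SEb_comparable hdmb (Rp_boundary hn hc) with h2 | h2
          · exact ⟨h2, he⟩
          · exfalso
            have := hp1 (by rw [hwpos]; exact h2)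
            omega
      by_cases hYX : weakSW (Ycell T) (Xend T)
      · have hpred := pred_spec hn hR hA (Ym_mem_chain hn hA hYX) (Ym_ne_posN hn hk2)
        have hMR2 : pos R (n - k + 1) = nextSW (chainSE T) (Ycell T) :=
          posR_m_case2 hn hR hA hk2 hYX
        have hcP : weakSW c (pos R (n - k + 1)) := by
          rw [hMR2]
          exact P_max hn hA hk2 hYX c hc hcY
        by_cases hcPeq : c = pos R (n - k + 1)
        · -- the stuck case: use the balance conditions of PropII
          have hS : ¬ ∃ d ∈ RpSE T, d.2 = (Ycell T).2 ∧ (Ycell T).1 < d.1 := by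
            intro hSS
            have hX1 := X_A1_spec hn hA hSS
            have h4 := hYX.1
            omega
          obtain ⟨hPRp, hProw, hPcol, hPY⟩ := P_pos_A2 hn hR hA hk2 hS
          have hsame : numCells lam mu - kSE T + 1 = n - k + 1 := rfl
          rw [hsame] at hPRp hProw hPcol hPY
          have hdmP : swLT (pos R v₀) (pos R (n - k + 1)) := hcPeq ▸ hdmc
          have hballem : ∀ W : Cell, Balanced R (Finset.Icc (n - k' + 1) (n - 1)) W →
              weakSW (pos R (n - k + 1)) W → weakSW (pos R v₀) W → False := by
            intro W hbal hPW hdmW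
            have := hbal.2 (n - k + 1) (hmS'f hk2) v₀ hv₀S' hPW hdmW hdmP
            omega
          have hXA2 := X_A2_spec hn hA hS
          have hXb := Rp_boundary hn (Xend_mem_Rp hn hA)
          have hdm1 : (pos R (n - k + 1)).1 ≤ (pos R v₀).1 := hdmP.1.1
          have hdm2 : (pos R v₀).2 ≤ (pos R (n - k + 1)).2 := hdmP.1.2
          have hnorthkill : Balanced R (Finset.Icc (n - k' + 1) (n - 1))
              (northBP lam mu (Xend T)) → False := by
            intro hbal
            have hWsp := northBP_spec hXb
            have he1 := hWsp.2.1
            have he2 := hWsp.2.2.1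
            have he3 := hXA2.1
            have he4 := hXA2.2.2
            exact hballem _ hbal ⟨by omega, by omega⟩ ⟨by omega, by omega⟩
          by_cases hNn : hasNorthNbr R k'
          · have hbal := hII.2.1 hNn
            rw [posR_N hn hR hA] at hbal
            exact hnorthkill hbal
          · by_cases hWn : hasWestNbr R k'
            · have hbal := hII.2.2.1 hWn
              rw [posR_N hn hR hA] at hbal
              have hWsp := westBP_spec hXb
              have he1 := hWsp.2.1
              have he3 := hXA2.1
              have hP2 : (pos R (n - k + 1)).2 ≤ (westBP lam mu (Xend T)).2 := by
                have h5 := no_strict_SE hWsp.1 (Rp_skew hn hPRp)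
                omega
              have hd2 : (pos R v₀).2 ≤ (westBP lam mu (Xend T)).2 := by
                have h5 := no_strict_SE hWsp.1 (SEb_mem_skew hdmb)
                omega
              exact hballem _ hbal ⟨by omega, hP2⟩ ⟨by omega, hd2⟩
            · have hbal := (hII.2.2.2 hNn hWn).1
              rw [posR_N hn hR hA] at hbal
              exact hnorthkill hbal
        · have hswcP : swLT c (pos R (n - k + 1)) := ⟨hcP, hcPeq⟩
          have hp2 := (clause' _ hwS' _ (hmS'f hk2) (by rw [hwpos]; exact hswcP)).2
          have := hp2 (by rw [hwpos]; exact hdmc.1)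
          omega
      · have hMR1 : pos R (n - k + 1) = Ycell T := posR_m_case1 hn hR hA hYX
        have hp2 := (clause' _ hwS' _ (hmS'f hk2) (by rw [hwpos, hMR1]; exact hcY)).2
        have := hp2 (by rw [hwpos]; exact hdmc.1)
        omega
  -- ================= assembly : Icc (m-1) n is min-unimodal in T =================
  have hIccne : (Finset.Icc m1 n).Nonempty := by
    rw [Finset.nonempty_Icc]
    omega
  have hbdall : ∀ x ∈ Finset.Icc m1 n, pos T x ∈ SEboundary lam mu := by
    intro x hx
    simp only [Finset.mem_Icc] at hx
    by_cases hx1 : x = m1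
    · rw [hx1, ← hdm'T]
      exact hdm'b
    · have hxRc : x ∈ RcSE T := mem_Rc_iff.mpr ⟨by omega, hx.2⟩
      exact Rp_boundary hn (pos_mem_Rp hxRc)
  have hRpall : ∀ x ∈ Finset.Icc m1 n, x ≠ m1 → pos T x ∈ RpSE T := by
    intro x hx hx1
    simp only [Finset.mem_Icc] at hx
    exact pos_mem_Rp (mem_Rc_iff.mpr ⟨by omega, hx.2⟩)
  have hGoal : MinUnimodalSE T (Finset.Icc m1 n) := by
    refine ⟨hIccne, ?_, hbdall, ?_, ?_, ?_⟩
    · intro x hx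
      simp only [Finset.mem_Icc] at hx ⊢
      omega
    · have hscn : ∀ x ∈ Finset.Icc m1 n, sameComp (skewCells lam mu) (pos T x) (posN T) := by
        intro x hx
        by_cases hx1 : x = m1
        · rw [hx1, ← hdm'T]
          have h5 := hcomp' m1 hm1S'
          rw [posR_N hn hR hA] at h5
          exact sameComp_trans h5 (Rp_sameComp hn (Xend_mem_Rp hn hA) (posN_mem_Rp hn))
        · exact Rp_sameComp hn (hRpall x hx hx1) (posN_mem_Rp hn)
      intro x hx y hy
      exact sameComp_trans (hscn x hx) (sameComp_symm (hscn y hy))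
    · intro x hx y hy
      exact SEb_comparable (hbdall x hx) (hbdall y hy)
    · intro x hx y hy hlt
      have hminI : (Finset.Icc m1 n).min' hIccne = m1 := by
        have hv : m1 ∈ Finset.Icc m1 n := by
          simp only [Finset.mem_Icc]
          omega
        apply le_antisymm
        · exact Finset.min'_le _ _ hv
        · apply Finset.le_min'
          intro z hz
          exact (Finset.mem_Icc.mp hz).1
      rw [hminI]
      have hxy : x ≠ y := fun he => hlt.2 (he ▸ rfl)
      simp only [Finset.mem_Icc] at hx hy
      by_cases hx1 : x = m1
      · subst hx1
        constructor
        · intro hw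
          exact ((hlt.2 (weakSW_antisymm hlt.1 hw))).elim
        · intro _
          omega
      · by_cases hy1 : y = m1
        · subst hy1
          constructor
          · intro _
            omega
          · intro hw
            exact ((hlt.2 (weakSW_antisymm hlt.1 hw))).elim
        · have hpx : pos T x ∈ RpSE T := hRpall x (by simp only [Finset.mem_Icc]; omega) hx1
          have hpy : pos T y ∈ RpSE T := hRpall y (by simp only [Finset.mem_Icc]; omega) hy1
          constructor
          · intro hw
            have hw' : weakSW (pos T y) (pos R m1) := by
              rw [hdm'T]
              exact hw
            have h5 := T1 hn hpx hpy hlt (hGa _ hpy hw')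
            rw [entry_pos T (by simp only [Finset.mem_Icc]; omega),
              entry_pos T (by simp only [Finset.mem_Icc]; omega)] at h5
            exact h5
          · intro hw
            have hw' : weakSW (pos R m1) (pos T x) := by
              rw [hdm'T]
              exact hw
            have h5 := T2 hn hpx hpy hlt (hGb _ hpx hw')
            rw [entry_pos T (by simp only [Finset.mem_Icc]; omega),
              entry_pos T (by simp only [Finset.mem_Icc]; omega)] at h5
            exact h5
  have hfin : MinUnimodalSE T (Finset.Icc (n - (k + 1) + 1) n) := by
    have he : n - (k + 1) + 1 = m1 := by omega
    rw [he]
    exact hGoal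
  have := le_kSE T (by omega) (by omega) hfin
  omega

end CaseA

end SkewSE
namespace SkewSE

open Finset

set_option linter.unusedSectionVars false

variable {lam mu : YoungDiagram}

/-! ### Part 11: transpose duality -/

lemma weakSW_swap {a b : Cell} : weakSW a.swap b.swap ↔ weakSW b a := by
  simp only [weakSW_iff, Prod.fst_swap, Prod.snd_swap]
  tauto

lemma swLT_swap {a b : Cell} : swLT a.swap b.swap ↔ swLT b a := by
  constructor
  · rintro ⟨h1, h2⟩
    exact ⟨weakSW_swap.mp h1, fun he => h2 (he ▸ rfl)⟩
  · rintro ⟨h1, h2⟩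
    refine ⟨weakSW_swap.mpr h1, fun he => h2 ?_⟩
    have := congrArg Prod.swap he
    simpa using this.symm

lemma mem_skew_tr {c : Cell} :
    c ∈ skewCells lam.transpose mu.transpose ↔ c.swap ∈ skewCells lam mu := by
  simp only [mem_skew_iff, YoungDiagram.mem_transpose]

lemma skew_tr_eq :
    skewCells lam.transpose mu.transpose = (skewCells lam mu).image Prod.swap := by
  ext c
  rw [mem_skew_tr, Finset.mem_image]
  constructor
  · intro h
    exact ⟨c.swap, h, by simp⟩
  · rintro ⟨d, hd, rfl⟩
    simpa using hd

lemma numCells_tr : numCells lam.transpose mu.transpose = numCells lam mu := by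
  rw [numCells, numCells, skew_tr_eq]
  exact Finset.card_image_of_injective _ Prod.swap_injective

/-- Transpose of a standard Young tableau. -/
def trSYT (T : SYT lam mu) : SYT lam.transpose mu.transpose where
  entry c := T.entry c.swap
  bijOn := by
    rw [numCells_tr]
    have h1 : Set.BijOn Prod.swap
        ((skewCells lam.transpose mu.transpose : Finset Cell) : Set Cell)
        ((skewCells lam mu : Finset Cell) : Set Cell) := by
      refine ⟨fun c hc => ?_, fun a _ b _ h => Prod.swap_injective h, fun c hc => ?_⟩
      · exact_mod_cast mem_skew_tr.mp (by exact_mod_cast hc)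
      · refine ⟨c.swap, ?_, by simp⟩
        have : (c.swap : Cell) ∈ skewCells lam.transpose mu.transpose := by
          rw [mem_skew_tr]
          simpa using hc
        exact_mod_cast this
    exact T.bijOn.comp h1
  row_lt := by
    intro i j h1 h2
    rw [mem_skew_tr] at h1 h2
    exact T.col_lt j i (by simpa using h1) (by simpa using h2)
  col_lt := by
    intro i j h1 h2
    rw [mem_skew_tr] at h1 h2
    exact T.row_lt j i (by simpa using h1) (by simpa using h2)
  zero_outside := by
    intro c hc
    apply T.zero_outside
    intro h
    apply hc
    rw [mem_skew_tr]
    simpa using h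

@[simp]
lemma trSYT_entry (T : SYT lam mu) (c : Cell) : (trSYT T).entry c = T.entry c.swap := rfl

lemma pos_tr (T : SYT lam mu) {x : ℕ} (hx : x ∈ Finset.Icc 1 (numCells lam mu)) :
    pos (trSYT T) x = (pos T x).swap := by
  have hx' : x ∈ Finset.Icc 1 (numCells lam.transpose mu.transpose) := by
    rwa [numCells_tr]
  apply (pos_eq_iff (trSYT T) hx' ?_).mpr
  · rw [trSYT_entry, Prod.swap_swap]
    exact entry_pos T hx
  · rw [mem_skew_tr, Prod.swap_swap]
    exact pos_mem T hx

lemma SEb_tr {c : Cell} :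
    c ∈ SEboundary lam.transpose mu.transpose ↔ c.swap ∈ SEboundary lam mu := by
  rw [mem_SEb_iff, mem_SEb_iff, mem_skew_tr, mem_skew_tr]
  constructor
  · rintro ⟨h1, h2⟩
    exact ⟨h1, fun h => h2 (by simpa using h)⟩
  · rintro ⟨h1, h2⟩
    exact ⟨h1, fun h => h2 (by simpa using h)⟩

lemma adjacent_swap {a b : Cell} : adjacent a.swap b.swap ↔ adjacent a b := by
  unfold adjacent
  simp only [Prod.fst_swap, Prod.snd_swap]
  tauto

lemma sameComp_tr {P : Finset Cell} {a b : Cell} :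
    sameComp (P.image Prod.swap) a.swap b.swap ↔ sameComp P a b := by
  have key : ∀ (Q : Finset Cell) (x y : Cell), sameComp Q x y →
      sameComp (Q.image Prod.swap) x.swap y.swap := by
    rintro Q x y ⟨hx, hy, hpath⟩
    refine ⟨Finset.mem_image_of_mem _ hx, Finset.mem_image_of_mem _ hy, ?_⟩
    apply Relation.ReflTransGen.lift (fun c : Cell => c.swap) ?_ _ _ hpath
    rintro c d ⟨h1, h2, h3⟩
    exact ⟨Finset.mem_image_of_mem _ h1, Finset.mem_image_of_mem _ h2,
      adjacent_swap.mpr h3⟩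
  constructor
  · intro h
    have := key _ _ _ h
    rw [Finset.image_image] at this
    simpa using this
  · exact key P a b

end SkewSE
namespace SkewSE

open Finset

set_option linter.unusedSectionVars false

variable {lam mu : YoungDiagram}

/-! ### Part 12: transfer of the main notions along transposition -/

lemma entry_tr_tr (T : SYT lam mu) : ∀ c, (trSYT (trSYT T)).entry c = T.entry c := by
  intro c
  simp

lemma MU_transport {lam1 mu1 lam2 mu2 : YoungDiagram} (h1 : lam1 = lam2) (h2 : mu1 = mu2)
    {T1 : SYT lam1 mu1} {T2 : SYT lam2 mu2} (hent : ∀ c, T1.entry c = T2.entry c) {S : Finset ℕ}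
    (h : MinUnimodalSE T1 S) : MinUnimodalSE T2 S := by
  subst h1
  subst h2
  have hpe : T1.entry = T2.entry := funext hent
  have hpos : pos T1 = pos T2 := by
    funext x
    unfold pos
    rw [hpe]
  unfold MinUnimodalSE at h ⊢
  rw [← hpos]
  exact h

lemma MU_tr_mpr (T : SYT lam mu) {S : Finset ℕ} (h : MinUnimodalSE T S) :
    MinUnimodalSE (trSYT T) S := by
  obtain ⟨hne, hsub, hbd, hsc, hcmp, hcl⟩ := h
  have hsub' : ∀ x ∈ S, x ∈ Finset.Icc 1 (numCells lam mu) := fun x hx => hsub hx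
  refine ⟨hne, ?_, ?_, ?_, ?_, ?_⟩
  · rw [numCells_tr]
    exact hsub
  · intro x hx
    rw [pos_tr T (hsub' x hx), SEb_tr, Prod.swap_swap]
    exact hbd x hx
  · intro x hx y hy
    rw [pos_tr T (hsub' x hx), pos_tr T (hsub' y hy), skew_tr_eq, sameComp_tr]
    exact hsc x hx y hy
  · intro x hx y hy
    rw [pos_tr T (hsub' x hx), pos_tr T (hsub' y hy), weakSW_swap, weakSW_swap]
    exact (hcmp x hx y hy).symm
  · intro x hx y hy hlt
    rw [pos_tr T (hsub' x hx), pos_tr T (hsub' y hy), swLT_swap] at hlt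
    have hm := hsub' _ (S.min'_mem hne)
    have := hcl y hy x hx hlt
    constructor
    · intro hw
      rw [pos_tr T (hsub' y hy), pos_tr T hm, weakSW_swap] at hw
      exact this.2 hw
    · intro hw
      rw [pos_tr T (hsub' x hx), pos_tr T hm, weakSW_swap] at hw
      exact this.1 hw

lemma MU_tr_iff (T : SYT lam mu) {S : Finset ℕ} :
    MinUnimodalSE (trSYT T) S ↔ MinUnimodalSE T S := by
  constructor
  · intro h
    exact MU_transport (lam.transpose_transpose) (mu.transpose_transpose)
      (entry_tr_tr T) (MU_tr_mpr (trSYT T) h)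
  · exact MU_tr_mpr T

lemma kSE_tr (T : SYT lam mu) : kSE (trSYT T) = kSE T := by
  unfold kSE
  congr 1
  ext k
  simp only [Set.mem_setOf_eq, numCells_tr, MU_tr_iff]

lemma RcSE_tr (T : SYT lam mu) : RcSE (trSYT T) = RcSE T := by
  unfold RcSE
  rw [kSE_tr, numCells_tr]

lemma RpSE_tr (T : SYT lam mu) (hn : 1 ≤ numCells lam mu) :
    RpSE (trSYT T) = (RpSE T).image Prod.swap := by
  unfold RpSE
  rw [RcSE_tr, Finset.image_image]
  apply Finset.image_congr
  intro x hx
  simp only [Function.comp_apply]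
  exact pos_tr T (Rc_subset_Icc hx)

lemma posN_tr (T : SYT lam mu) (hn : 1 ≤ numCells lam mu) :
    posN (trSYT T) = (posN T).swap := by
  unfold posN
  rw [numCells_tr]
  exact pos_tr T (by simp; omega)

lemma Ycell_tr (T : SYT lam mu) (hn : 1 ≤ numCells lam mu) :
    Ycell (trSYT T) = (Ycell T).swap := by
  unfold Ycell
  rw [numCells_tr, kSE_tr]
  exact pos_tr T (Rc_subset_Icc (m_mem_Rc hn))

lemma SWmost_tr (T : SYT lam mu) (hn : 1 ≤ numCells lam mu) :
    SWmostAtN (trSYT T) ↔ NEmostAtN T := by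
  unfold SWmostAtN NEmostAtN
  rw [RpSE_tr T hn, posN_tr T hn]
  constructor
  · intro h c hc
    have := h c.swap (Finset.mem_image_of_mem _ hc)
    rwa [weakSW_swap] at this
  · intro h c hc
    obtain ⟨d, hd, rfl⟩ := Finset.mem_image.mp hc
    rw [weakSW_swap]
    exact h d hd

end SkewSE
namespace SkewSE

open Finset

set_option linter.unusedSectionVars false

variable {lam mu : YoungDiagram}

/-! ### Part 13: transfer of the choice-based constructions -/

lemma southEnd_eq {P : Finset Cell} {Y c : Cell} (hc : c ∈ P) (h2 : c.2 = Y.2)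
    (h3 : ∀ d ∈ P, d.2 = Y.2 → d.1 ≤ c.1) : southEnd P Y = c := by
  have hs := southEnd_spec ⟨c, hc, h2, h3⟩
  have e1 := hs.2.2 c hc h2
  have e2 := h3 _ hs.1 hs.2.1
  exact Prod.ext (by omega) (by rw [hs.2.1, h2])

lemma eastEnd_eq {P : Finset Cell} {Y c : Cell} (hc : c ∈ P) (h2 : c.1 = Y.1)
    (h3 : ∀ d ∈ P, d.1 = Y.1 → d.2 ≤ c.2) : eastEnd P Y = c := by
  have hs := eastEnd_spec ⟨c, hc, h2, h3⟩
  have e1 := hs.2.2 c hc h2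
  have e2 := h3 _ hs.1 hs.2.1
  exact Prod.ext (by rw [hs.2.1, h2]) (by omega)

lemma southEnd_tr (P : Finset Cell) (Y : Cell) :
    southEnd (P.image Prod.swap) Y.swap = (eastEnd P Y).swap := by
  by_cases h : ∃ c ∈ P, c.1 = Y.1 ∧ ∀ d ∈ P, d.1 = Y.1 → d.2 ≤ c.2
  · have hs := eastEnd_spec h
    apply southEnd_eq (Finset.mem_image_of_mem _ hs.1) (by simp [hs.2.1])
    intro d hd hd2
    obtain ⟨e, he, rfl⟩ := Finset.mem_image.mp hd
    simp only [Prod.fst_swap, Prod.snd_swap] at hd2 ⊢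
    exact hs.2.2 e he hd2
  · have h2 : ¬ ∃ c ∈ P.image Prod.swap, c.2 = Y.swap.2 ∧
        ∀ d ∈ P.image Prod.swap, d.2 = Y.swap.2 → d.1 ≤ c.1 := by
      rintro ⟨c, hc, hc2, hc3⟩
      obtain ⟨e, he, rfl⟩ := Finset.mem_image.mp hc
      refine h ⟨e, he, by simpa using hc2, fun d hd hd1 => ?_⟩
      have := hc3 d.swap (Finset.mem_image_of_mem _ hd) (by simpa using hd1)
      simpa using this
    rw [southEnd, dif_neg h2, eastEnd, dif_neg h]

lemma eastEnd_tr (P : Finset Cell) (Y : Cell) :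
    eastEnd (P.image Prod.swap) Y.swap = (southEnd P Y).swap := by
  by_cases h : ∃ c ∈ P, c.2 = Y.2 ∧ ∀ d ∈ P, d.2 = Y.2 → d.1 ≤ c.1
  · have hs := southEnd_spec h
    apply eastEnd_eq (Finset.mem_image_of_mem _ hs.1) (by simp [hs.2.1])
    intro d hd hd2
    obtain ⟨e, he, rfl⟩ := Finset.mem_image.mp hd
    simp only [Prod.fst_swap, Prod.snd_swap] at hd2 ⊢
    exact hs.2.2 e he hd2
  · have h2 : ¬ ∃ c ∈ P.image Prod.swap, c.1 = Y.swap.1 ∧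
        ∀ d ∈ P.image Prod.swap, d.1 = Y.swap.1 → d.2 ≤ c.2 := by
      rintro ⟨c, hc, hc2, hc3⟩
      obtain ⟨e, he, rfl⟩ := Finset.mem_image.mp hc
      refine h ⟨e, he, by simpa using hc2, fun d hd hd1 => ?_⟩
      have := hc3 d.swap (Finset.mem_image_of_mem _ hd) (by simpa using hd1)
      simpa using this
    rw [eastEnd, dif_neg h2, southEnd, dif_neg h]

lemma nextNE_eq {P : Finset Cell} {c d : Cell} (hd : d ∈ P) (h1 : swLT c d)
    (h2 : ∀ e ∈ P, swLT c e → weakSW d e) : nextNE P c = d := by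
  have hs := nextNE_spec ⟨d, hd, h1, h2⟩
  exact weakSW_antisymm (hs.2.2 d hd h1) (h2 _ hs.1 hs.2.1)

lemma nextSW_eq {P : Finset Cell} {c d : Cell} (hd : d ∈ P) (h1 : swLT d c)
    (h2 : ∀ e ∈ P, swLT e c → weakSW e d) : nextSW P c = d := by
  have hs := nextSW_spec ⟨d, hd, h1, h2⟩
  exact weakSW_antisymm (h2 _ hs.1 hs.2.1) (hs.2.2 d hd h1)

lemma nextNE_tr (P : Finset Cell) (c : Cell) :
    nextNE (P.image Prod.swap) c.swap = (nextSW P c).swap := by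
  by_cases h : ∃ d ∈ P, swLT d c ∧ ∀ e ∈ P, swLT e c → weakSW e d
  · have hs := nextSW_spec h
    apply nextNE_eq (Finset.mem_image_of_mem _ hs.1) (swLT_swap.mpr hs.2.1)
    intro e he hce
    obtain ⟨f, hf, rfl⟩ := Finset.mem_image.mp he
    rw [weakSW_swap]
    exact hs.2.2 f hf (swLT_swap.mp hce)
  · have h2 : ¬ ∃ d ∈ P.image Prod.swap, swLT c.swap d ∧
        ∀ e ∈ P.image Prod.swap, swLT c.swap e → weakSW d e := by
      rintro ⟨d, hd, hd1, hd2⟩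
      obtain ⟨e, he, rfl⟩ := Finset.mem_image.mp hd
      refine h ⟨e, he, swLT_swap.mp hd1, fun f hf hfc => ?_⟩
      have := hd2 f.swap (Finset.mem_image_of_mem _ hf) (swLT_swap.mpr hfc)
      rwa [weakSW_swap] at this
    rw [nextNE, dif_neg h2, nextSW, dif_neg h]

lemma northBP_spec' {Z : Cell}
    (h : ∃ c ∈ SEboundary lam mu, c.2 = Z.2 ∧ c.1 ≤ Z.1 ∧
      ∀ d ∈ SEboundary lam mu, d.2 = Z.2 → d.1 ≤ Z.1 → c.1 ≤ d.1) :
    northBP lam mu Z ∈ SEboundary lam mu ∧ (northBP lam mu Z).2 = Z.2 ∧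
      (northBP lam mu Z).1 ≤ Z.1 ∧
      ∀ d ∈ SEboundary lam mu, d.2 = Z.2 → d.1 ≤ Z.1 → (northBP lam mu Z).1 ≤ d.1 := by
  rw [northBP, dif_pos h]
  exact ⟨h.choose_spec.1, h.choose_spec.2.1, h.choose_spec.2.2.1, h.choose_spec.2.2.2⟩

lemma westBP_spec' {Z : Cell}
    (h : ∃ c ∈ SEboundary lam mu, c.1 = Z.1 ∧ c.2 ≤ Z.2 ∧
      ∀ d ∈ SEboundary lam mu, d.1 = Z.1 → d.2 ≤ Z.2 → c.2 ≤ d.2) :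
    westBP lam mu Z ∈ SEboundary lam mu ∧ (westBP lam mu Z).1 = Z.1 ∧
      (westBP lam mu Z).2 ≤ Z.2 ∧
      ∀ d ∈ SEboundary lam mu, d.1 = Z.1 → d.2 ≤ Z.2 → (westBP lam mu Z).2 ≤ d.2 := by
  rw [westBP, dif_pos h]
  exact ⟨h.choose_spec.1, h.choose_spec.2.1, h.choose_spec.2.2.1, h.choose_spec.2.2.2⟩

lemma northBP_eq {Z c : Cell} (hc : c ∈ SEboundary lam mu) (h1 : c.2 = Z.2) (h2 : c.1 ≤ Z.1)
    (h3 : ∀ d ∈ SEboundary lam mu, d.2 = Z.2 → d.1 ≤ Z.1 → c.1 ≤ d.1) :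
    northBP lam mu Z = c := by
  have hs := northBP_spec' (lam := lam) (mu := mu) (Z := Z) ⟨c, hc, h1, h2, h3⟩
  have e1 := hs.2.2.2 c hc h1 h2
  have e2 := h3 _ hs.1 hs.2.1 hs.2.2.1
  exact Prod.ext (by omega) (by rw [hs.2.1, h1])

lemma westBP_eq {Z c : Cell} (hc : c ∈ SEboundary lam mu) (h1 : c.1 = Z.1) (h2 : c.2 ≤ Z.2)
    (h3 : ∀ d ∈ SEboundary lam mu, d.1 = Z.1 → d.2 ≤ Z.2 → c.2 ≤ d.2) :
    westBP lam mu Z = c := by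
  have hs := westBP_spec' (lam := lam) (mu := mu) (Z := Z) ⟨c, hc, h1, h2, h3⟩
  have e1 := hs.2.2.2 c hc h1 h2
  have e2 := h3 _ hs.1 hs.2.1 hs.2.2.1
  exact Prod.ext (by rw [hs.2.1, h1]) (by omega)

lemma northBP_tr (Z : Cell) :
    northBP lam.transpose mu.transpose Z.swap = (westBP lam mu Z).swap := by
  by_cases h : ∃ c ∈ SEboundary lam mu, c.1 = Z.1 ∧ c.2 ≤ Z.2 ∧
      ∀ d ∈ SEboundary lam mu, d.1 = Z.1 → d.2 ≤ Z.2 → c.2 ≤ d.2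
  · have hs' := westBP_spec' h
    apply northBP_eq (SEb_tr.mpr (by simpa using hs'.1)) (by simp [hs'.2.1])
      (by simp [hs'.2.2.1])
    intro d hd hd1 hd2
    rw [SEb_tr] at hd
    have := hs'.2.2.2 d.swap hd (by simpa using hd1) (by simpa using hd2)
    simpa using this
  · have h2 : ¬ ∃ c ∈ SEboundary lam.transpose mu.transpose, c.2 = Z.swap.2 ∧ c.1 ≤ Z.swap.1 ∧
        ∀ d ∈ SEboundary lam.transpose mu.transpose, d.2 = Z.swap.2 → d.1 ≤ Z.swap.1 →
          c.1 ≤ d.1 := by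
      rintro ⟨c, hc, hc1, hc2, hc3⟩
      rw [SEb_tr] at hc
      refine h ⟨c.swap, hc, by simpa using hc1, by simpa using hc2, fun d hd hd1 hd2 => ?_⟩
      have := hc3 d.swap (SEb_tr.mpr (by simpa using hd)) (by simpa using hd1)
        (by simpa using hd2)
      simpa using this
    rw [northBP, dif_neg h2, westBP, dif_neg h]

lemma westBP_tr (Z : Cell) :
    westBP lam.transpose mu.transpose Z.swap = (northBP lam mu Z).swap := by
  by_cases h : ∃ c ∈ SEboundary lam mu, c.2 = Z.2 ∧ c.1 ≤ Z.1 ∧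
      ∀ d ∈ SEboundary lam mu, d.2 = Z.2 → d.1 ≤ Z.1 → c.1 ≤ d.1
  · have hs' := northBP_spec' h
    apply westBP_eq (SEb_tr.mpr (by simpa using hs'.1)) (by simp [hs'.2.1])
      (by simp [hs'.2.2.1])
    intro d hd hd1 hd2
    rw [SEb_tr] at hd
    have := hs'.2.2.2 d.swap hd (by simpa using hd1) (by simpa using hd2)
    simpa using this
  · have h2 : ¬ ∃ c ∈ SEboundary lam.transpose mu.transpose, c.1 = Z.swap.1 ∧ c.2 ≤ Z.swap.2 ∧
        ∀ d ∈ SEboundary lam.transpose mu.transpose, d.1 = Z.swap.1 → d.2 ≤ Z.swap.2 →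
          c.2 ≤ d.2 := by
      rintro ⟨c, hc, hc1, hc2, hc3⟩
      rw [SEb_tr] at hc
      refine h ⟨c.swap, hc, by simpa using hc1, by simpa using hc2, fun d hd hd1 hd2 => ?_⟩
      have := hc3 d.swap (SEb_tr.mpr (by simpa using hd)) (by simpa using hd1)
        (by simpa using hd2)
      simpa using this
    rw [westBP, dif_neg h2, northBP, dif_neg h]

section TransferX

variable {T : SYT lam mu} (hn : 1 ≤ numCells lam mu)
  (hNE : ¬ SWmostAtN T) (hA' : SWmostAtN (trSYT T))

include hn hNE hA'

lemma Xend_tr : Xend (trSYT T) = (Xend T).swap := by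
  rw [Xend, Xend, if_pos hA', if_neg hNE]
  have hcond : (∃ c ∈ RpSE (trSYT T), c.2 = (Ycell (trSYT T)).2 ∧ (Ycell (trSYT T)).1 < c.1) ↔
      (∃ c ∈ RpSE T, c.1 = (Ycell T).1 ∧ (Ycell T).2 < c.2) := by
    rw [RpSE_tr T hn, Ycell_tr T hn]
    constructor
    · rintro ⟨c, hc, h1, h2⟩
      obtain ⟨d, hd, rfl⟩ := Finset.mem_image.mp hc
      exact ⟨d, hd, by simpa using h1, by simpa using h2⟩
    · rintro ⟨d, hd, h1, h2⟩
      exact ⟨d.swap, Finset.mem_image_of_mem _ hd, by simpa using h1, by simpa using h2⟩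
  by_cases hc : ∃ c ∈ RpSE T, c.1 = (Ycell T).1 ∧ (Ycell T).2 < c.2
  · rw [if_pos (hcond.mpr hc), if_pos hc, RpSE_tr T hn, Ycell_tr T hn, southEnd_tr]
  · rw [if_neg (fun h => hc (hcond.mp h)), if_neg hc, RpSE_tr T hn, Ycell_tr T hn, eastEnd_tr]

lemma chainSE_tr : chainSE (trSYT T) = (chainSE T).image Prod.swap := by
  unfold chainSE
  rw [RpSE_tr T hn, Xend_tr hn hNE hA', posN_tr T hn]
  rw [Finset.filter_image]
  congr 1
  apply Finset.filter_congr
  intro d _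
  simp only [Function.comp_apply, weakSW_swap]
  tauto

lemma rotEntry_tr : ∀ c, rotEntry (trSYT T) c = rotEntry T c.swap := by
  intro c
  unfold rotEntry
  have hchain := chainSE_tr hn hNE hA' (T := T)
  have hch : c ∈ chainSE (trSYT T) ↔ c.swap ∈ chainSE T := by
    rw [hchain]
    constructor
    · intro h
      obtain ⟨d, hd, rfl⟩ := Finset.mem_image.mp h
      simpa using hd
    · intro h
      have := Finset.mem_image_of_mem Prod.swap h
      simpa using this
  have hXe : (c = Xend (trSYT T)) ↔ (c.swap = Xend T) := by
    rw [Xend_tr hn hNE hA']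
    constructor
    · intro h
      rw [h, Prod.swap_swap]
    · intro h
      rw [← h, Prod.swap_swap]
  by_cases h1 : c ∈ chainSE (trSYT T)
  · rw [if_pos h1, if_pos (hch.mp h1)]
    by_cases h2 : c = Xend (trSYT T)
    · rw [if_pos h2, if_pos (hXe.mp h2), numCells_tr]
    · rw [if_neg h2, if_neg (fun h => h2 (hXe.mpr h)), if_pos hA', if_neg hNE, trSYT_entry]
      congr 1
      rw [hchain]
      conv_lhs => rw [show c = (c.swap).swap from (Prod.swap_swap c).symm]
      rw [nextNE_tr]
      exact Prod.swap_swap _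
  · rw [if_neg h1, if_neg (fun h => h1 (hch.mpr h)), trSYT_entry]

end TransferX

end SkewSE
namespace SkewSE

open Finset

set_option linter.unusedSectionVars false

variable {lam mu : YoungDiagram}

/-! ### Part 14: transfer of Properties (i) and (ii) -/

section Transfer2

variable {R : SYT lam mu} (hn : 1 ≤ numCells lam mu)

include hn

lemma hasN_tr {k : ℕ} : hasNorthNbr (trSYT R) k ↔ hasWestNbr R k := by
  unfold hasNorthNbr hasWestNbr
  rw [numCells_tr]
  have hxm : ∀ x ∈ Finset.Icc (numCells lam mu - k + 1) (numCells lam mu - 1),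
      x ∈ Finset.Icc 1 (numCells lam mu) := by
    intro x hx
    simp only [Finset.mem_Icc] at hx ⊢
    omega
  have hnm : numCells lam mu ∈ Finset.Icc 1 (numCells lam mu) := by simp; omega
  constructor
  · rintro ⟨x, hx, h1, h2⟩
    rw [pos_tr R (hxm x hx), pos_tr R hnm] at h1 h2
    exact ⟨x, hx, by simpa using h1, by simpa using h2⟩
  · rintro ⟨x, hx, h1, h2⟩
    refine ⟨x, hx, ?_, ?_⟩ <;> rw [pos_tr R (hxm x hx), pos_tr R hnm] <;> simpa

lemma hasW_tr {k : ℕ} : hasWestNbr (trSYT R) k ↔ hasNorthNbr R k := by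
  unfold hasNorthNbr hasWestNbr
  rw [numCells_tr]
  have hxm : ∀ x ∈ Finset.Icc (numCells lam mu - k + 1) (numCells lam mu - 1),
      x ∈ Finset.Icc 1 (numCells lam mu) := by
    intro x hx
    simp only [Finset.mem_Icc] at hx ⊢
    omega
  have hnm : numCells lam mu ∈ Finset.Icc 1 (numCells lam mu) := by simp; omega
  constructor
  · rintro ⟨x, hx, h1, h2⟩
    rw [pos_tr R (hxm x hx), pos_tr R hnm] at h1 h2
    exact ⟨x, hx, by simpa using h1, by simpa using h2⟩
  · rintro ⟨x, hx, h1, h2⟩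
    refine ⟨x, hx, ?_, ?_⟩ <;> rw [pos_tr R (hxm x hx), pos_tr R hnm] <;> simpa

lemma Balanced_tr {S : Finset ℕ} (hS : ∀ x ∈ S, x ∈ Finset.Icc 1 (numCells lam mu))
    (W : Cell) : Balanced (trSYT R) S W.swap ↔ Balanced R S W := by
  constructor
  · rintro ⟨h1, h2⟩
    constructor
    · intro x hx y hy hw1 hw2 hlt
      apply h2 x hx y hy
      · rw [pos_tr R (hS x hx)]
        exact weakSW_swap.mpr hw1
      · rw [pos_tr R (hS y hy)]
        exact weakSW_swap.mpr hw2
      · rw [pos_tr R (hS x hx), pos_tr R (hS y hy)]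
        exact swLT_swap.mpr hlt
    · intro x hx y hy hw1 hw2 hlt
      apply h1 x hx y hy
      · rw [pos_tr R (hS x hx)]
        exact weakSW_swap.mpr hw1
      · rw [pos_tr R (hS y hy)]
        exact weakSW_swap.mpr hw2
      · rw [pos_tr R (hS y hy), pos_tr R (hS x hx)]
        exact swLT_swap.mpr hlt
  · rintro ⟨h1, h2⟩
    constructor
    · intro x hx y hy hw1 hw2 hlt
      rw [pos_tr R (hS x hx)] at hw1 hlt
      rw [pos_tr R (hS y hy)] at hw2 hlt
      exact h2 x hx y hy (weakSW_swap.mp hw1) (weakSW_swap.mp hw2) (swLT_swap.mp hlt)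
    · intro x hx y hy hw1 hw2 hlt
      rw [pos_tr R (hS x hx)] at hw1 hlt
      rw [pos_tr R (hS y hy)] at hw2 hlt
      exact h1 x hx y hy (weakSW_swap.mp hw1) (weakSW_swap.mp hw2) (swLT_swap.mp hlt)

lemma PropI_tr {k : ℕ} : PropI (trSYT R) k ↔ PropI R k := by
  unfold PropI
  rw [numCells_tr]
  have hxm : ∀ x ∈ Finset.Icc (numCells lam mu - k + 1) (numCells lam mu - 1),
      x ∈ Finset.Icc 1 (numCells lam mu) := by
    intro x hx
    simp only [Finset.mem_Icc] at hx ⊢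
    omega
  have hnm : numCells lam mu ∈ Finset.Icc 1 (numCells lam mu) := by simp; omega
  constructor
  · intro h hne
    obtain ⟨h1, h2⟩ := h hne
    refine ⟨(MU_tr_iff R).mp h1, fun x hx => ?_⟩
    have := h2 x hx
    rw [pos_tr R (hxm x hx), pos_tr R hnm, skew_tr_eq, sameComp_tr] at this
    exact this
  · intro h hne
    obtain ⟨h1, h2⟩ := h hne
    refine ⟨(MU_tr_iff R).mpr h1, fun x hx => ?_⟩
    rw [pos_tr R (hxm x hx), pos_tr R hnm, skew_tr_eq, sameComp_tr]
    exact h2 x hx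

lemma PropII_tr {k : ℕ} : PropII (trSYT R) k ↔ PropII R k := by
  have hnm : numCells lam mu ∈ Finset.Icc 1 (numCells lam mu) := by simp; omega
  have hxm : ∀ x ∈ Finset.Icc (numCells lam mu - k + 1) (numCells lam mu - 1),
      x ∈ Finset.Icc 1 (numCells lam mu) := by
    intro x hx
    simp only [Finset.mem_Icc] at hx ⊢
    omega
  have eN : ∀ W : Cell, Balanced (trSYT R) (Finset.Icc (numCells lam mu - k + 1)
      (numCells lam mu - 1)) W.swap ↔ Balanced R (Finset.Icc (numCells lam mu - k + 1)
      (numCells lam mu - 1)) W := fun W => Balanced_tr hn hxm W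
  unfold PropII
  rw [numCells_tr, pos_tr R hnm, northBP_tr, westBP_tr, hasN_tr hn, hasW_tr hn,
    eN (westBP lam mu (pos R (numCells lam mu))), eN (northBP lam mu (pos R (numCells lam mu)))]
  constructor
  · rintro ⟨a, b, c, d⟩
    exact ⟨fun h => a ⟨h.2, h.1⟩, c, b, fun h1 h2 => (d h2 h1).symm⟩
  · rintro ⟨a, b, c, d⟩
    exact ⟨fun h => a ⟨h.2, h.1⟩, c, b, fun h1 h2 => (d h2 h1).symm⟩

end Transfer2

/-- Property (ii) is trivial when `S` is empty. -/
lemma propII_empty {R : SYT lam mu} {k : ℕ}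
    (h : numCells lam mu - 1 < numCells lam mu - k + 1) : PropII R k := by
  have hemp : ∀ x : ℕ, x ∉ Finset.Icc (numCells lam mu - k + 1) (numCells lam mu - 1) := by
    intro x hx
    simp only [Finset.mem_Icc] at hx
    omega
  have hbal : ∀ W : Cell, Balanced R
      (Finset.Icc (numCells lam mu - k + 1) (numCells lam mu - 1)) W := by
    intro W
    exact ⟨fun x hx => absurd hx (hemp x), fun x hx => absurd hx (hemp x)⟩
  refine ⟨fun h2 => ?_, fun _ => hbal _, fun _ => hbal _, fun _ _ => ⟨hbal _, hbal _⟩⟩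
  obtain ⟨x, hx, _⟩ := h2.1
  exact hemp x hx

end SkewSE
namespace SkewSE

open Finset

/-- Lemma `recover-rcse`. Let `R = Rot_SE(T)`.  Then
`Rc_SE(T) = {n, …, n-k+1}` where `k` is maximal such that
`S = {n-1, …, n-k+1}` satisfies properties (i) and (ii) in `R`. -/
theorem recover_rcse (lam mu : YoungDiagram) (hsub : mu ≤ lam)
    (T R : SYT lam mu) (hR : R.entry = rotEntry T) :
    ∃ k : ℕ, k ≤ numCells lam mu ∧ PropI R k ∧ PropII R k ∧
      (∀ k' : ℕ, k' ≤ numCells lam mu → PropI R k' → PropII R k' → k' ≤ k) ∧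
      RcSE T = Finset.Icc (numCells lam mu - k + 1) (numCells lam mu) := by
  by_cases hn : 1 ≤ numCells lam mu
  · by_cases hA : SWmostAtN T
    · refine ⟨kSE T, (kSE_mem T hn).2.1, propI_caseA hn hR hA, ?_, ?_, rfl⟩
      · by_cases hk2 : 2 ≤ kSE T
        · by_cases hS : ∃ c ∈ RpSE T, c.2 = (Ycell T).2 ∧ (Ycell T).1 < c.1
          · exact propII_A1 hn hR hA hk2 hS
          · exact propII_A2 hn hR hA hk2 hS
        · apply propII_empty
          have := (kSE_mem T hn).1
          omega
      · intro k' hk' hI hII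
        by_contra hlt
        push_neg at hlt
        exact backward_A hn hR hA hk' hlt hI hII
    · have hB := (posN_extremal hn).resolve_left hA
      have hA' : SWmostAtN (trSYT T) := (SWmost_tr T hn).mpr hB
      have hn' : 1 ≤ numCells lam.transpose mu.transpose := by rw [numCells_tr]; exact hn
      have hR' : (trSYT R).entry = rotEntry (trSYT T) := by
        funext c
        rw [trSYT_entry, hR]
        exact (rotEntry_tr hn hA hA' c).symm
      refine ⟨kSE T, (kSE_mem T hn).2.1, ?_, ?_, ?_, rfl⟩
      · have h1 := propI_caseA hn' hR' hA'
        rw [kSE_tr] at h1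
        exact (PropI_tr hn).mp h1
      · by_cases hk2 : 2 ≤ kSE (trSYT T)
        · have h1 : PropII (trSYT R) (kSE (trSYT T)) := by
            by_cases hS : ∃ c ∈ RpSE (trSYT T), c.2 = (Ycell (trSYT T)).2 ∧
                (Ycell (trSYT T)).1 < c.1
            · exact propII_A1 hn' hR' hA' hk2 hS
            · exact propII_A2 hn' hR' hA' hk2 hS
          rw [kSE_tr] at h1
          exact (PropII_tr hn).mp h1
        · apply propII_empty
          rw [kSE_tr] at hk2
          have := (kSE_mem T hn).1
          omega
      · intro k' hk' hI hII
        by_contra hlt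
        push_neg at hlt
        apply backward_A hn' hR' hA' (k' := k')
        · rw [numCells_tr]
          exact hk'
        · rw [kSE_tr]
          exact hlt
        · exact (PropI_tr hn).mpr hI
        · exact (PropII_tr hn).mpr hII
  · have hn0 : numCells lam mu = 0 := by omega
    refine ⟨0, by omega, ?_, ?_, ?_, ?_⟩
    · intro hne
      rw [Finset.nonempty_Icc] at hne
      omega
    · apply propII_empty
      omega
    · intro k' hk' _ _
      omega
    · ext x
      rw [mem_Rc_iff, Finset.mem_Icc]
      omega

end SkewSE
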